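/- arXiv:1003.0646 — 4 statements merged into one kernel-verified Lean document; each statement's English description precedes it below -/
import Mathlib

section
/- For every real p > 0 there exists a constant C > 0, depending only on p, such that for all x, y ∈ ℝ^n and every θ ∈ [0,1]: (i) if 0 < p ≤ 1, then | |x−y|^p − |y|^p − |x|^p | ≤ C·|x|^{pθ}·|y|^{p(1−θ)}; (ii) if p > 1, then | |x−y|^p − |y|^p − |x|^p | ≤ C·( |x|^{p−1}·|y| + |x|·|y|^{p−1} ). -/
/-- Real subadditivity of `rpow` for exponents in `[0,1]`. -/
lemma my_rpow_subadd {p a b : ℝ} (hp0 : 0 ≤ p) (hp1 : p ≤ 1) (ha : 0 ≤ a) (hb : 0 ≤ b) :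
    (a + b) ^ p ≤ a ^ p + b ^ p := by
  lift a to NNReal using ha
  lift b to NNReal using hb
  exact_mod_cast NNReal.rpow_add_le_add_rpow a b hp0 hp1

/-- Mean value type bound: `u^p - v^p ≤ p u^{p-1} (u - v)` for `0 ≤ v ≤ u`, `1 ≤ p`. -/
lemma my_rpow_sub_rpow_le {p u v : ℝ} (hp : 1 ≤ p) (hv : 0 ≤ v) (hvu : v ≤ u) :
    u ^ p - v ^ p ≤ p * u ^ (p - 1) * (u - v) := by
  rcases eq_or_lt_of_le (hv.trans hvu) with hu | hu
  · have hu0 : u = 0 := hu.symm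
    have hv0 : v = 0 := le_antisymm (hvu.trans_eq hu0) hv
    simp [hu0, hv0]
  · have hs : (-1 : ℝ) ≤ v / u - 1 := by
      have : 0 ≤ v / u := div_nonneg hv hu.le
      linarith
    have hB := one_add_mul_self_le_rpow_one_add hs hp
    have h1s : 1 + (v / u - 1) = v / u := by ring
    rw [h1s, Real.div_rpow hv hu.le] at hB
    have hup : (0 : ℝ) < u ^ p := Real.rpow_pos_of_pos hu p
    have hkey : u ^ p * (1 + p * (v / u - 1)) ≤ v ^ p := by
      have := mul_le_mul_of_nonneg_left hB hup.le
      calc u ^ p * (1 + p * (v / u - 1)) ≤ u ^ p * (v ^ p / u ^ p) := this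
        _ = v ^ p := by field_simp
    have hpow : u ^ (p - 1) * u = u ^ p := by
      rw [← Real.rpow_add_one hu.ne' (p - 1)]; ring_nf
    have hdiv : u ^ p * (v / u) = u ^ (p - 1) * v := by
      rw [← hpow]; field_simp
    nlinarith [hkey, hdiv]

/-- Key scalar estimate for `p ≤ 1`. -/
lemma my_key1 {p a b c : ℝ} (hp : 0 < p) (hp1 : p ≤ 1) (ha : 0 ≤ a) (hb : 0 ≤ b)
    (hc : 0 ≤ c) (h1 : c ≤ a + b) (h2 : b ≤ a + c) :
    |c ^ p - b ^ p - a ^ p| ≤ 2 * a ^ p := by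
  have hupper : c ^ p ≤ a ^ p + b ^ p :=
    (Real.rpow_le_rpow hc h1 hp.le).trans (my_rpow_subadd hp.le hp1 ha hb)
  have hlower : b ^ p ≤ a ^ p + c ^ p :=
    (Real.rpow_le_rpow hb h2 hp.le).trans (my_rpow_subadd hp.le hp1 ha hc)
  have hap : 0 ≤ a ^ p := Real.rpow_nonneg ha p
  rw [abs_le]; constructor <;> nlinarith

/-- Key scalar estimate for `p > 1`, with `b ≤ a`. -/
lemma my_key2 {p a b c : ℝ} (hp : 1 < p) (ha : 0 ≤ a) (hb : 0 ≤ b) (hc : 0 ≤ c)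
    (hba : b ≤ a) (h1 : c ≤ a + b) (h2 : a ≤ c + b) :
    |c ^ p - b ^ p - a ^ p| ≤ (p + 1) * 2 ^ (p - 1) * (a ^ (p - 1) * b) := by
  have hp0 : (0:ℝ) ≤ p - 1 := by linarith
  have hab : 0 ≤ a + b := by linarith
  have hstep : |c ^ p - a ^ p| ≤ p * (a + b) ^ (p - 1) * b := by
    rcases le_total c a with h | h
    · have := my_rpow_sub_rpow_le hp.le hc h
      have hmono : a ^ (p - 1) ≤ (a + b) ^ (p - 1) :=
        Real.rpow_le_rpow ha (by linarith) hp0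
      have hpos : (0:ℝ) ≤ a ^ (p - 1) := Real.rpow_nonneg ha _
      rw [abs_sub_comm, abs_of_nonneg (sub_nonneg.2 (Real.rpow_le_rpow hc h (by linarith)))]
      have hac : a - c ≤ b := by linarith
      calc a ^ p - c ^ p ≤ p * a ^ (p - 1) * (a - c) := this
        _ ≤ p * (a + b) ^ (p - 1) * b := by
            apply mul_le_mul
            · exact mul_le_mul_of_nonneg_left hmono (by linarith)
            · exact hac
            · linarith
            · positivity
    · have := my_rpow_sub_rpow_le hp.le ha h
      have hmono : c ^ (p - 1) ≤ (a + b) ^ (p - 1) :=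
        Real.rpow_le_rpow hc h1 hp0
      rw [abs_of_nonneg (sub_nonneg.2 (Real.rpow_le_rpow ha h (by linarith)))]
      have hca : c - a ≤ b := by linarith
      calc c ^ p - a ^ p ≤ p * c ^ (p - 1) * (c - a) := this
        _ ≤ p * (a + b) ^ (p - 1) * b := by
            apply mul_le_mul
            · exact mul_le_mul_of_nonneg_left hmono (by linarith)
            · exact hca
            · linarith
            · positivity
  have hbp : b ^ p ≤ (a + b) ^ (p - 1) * b := by
    rcases eq_or_lt_of_le hb with hb0 | hb0
    · simp [← hb0, Real.zero_rpow (by linarith : p ≠ 0)]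
    · have : b ^ p = b ^ (p - 1) * b := by
        rw [← Real.rpow_add_one hb0.ne' (p - 1)]; ring_nf
      rw [this]
      exact mul_le_mul_of_nonneg_right (Real.rpow_le_rpow hb (by linarith) hp0) hb
  have habs : |c ^ p - b ^ p - a ^ p| ≤ |c ^ p - a ^ p| + b ^ p := by
    have h0 : 0 ≤ b ^ p := Real.rpow_nonneg hb p
    have := abs_sub (c ^ p - a ^ p) (b ^ p)
    calc |c ^ p - b ^ p - a ^ p| = |(c ^ p - a ^ p) - b ^ p| := by ring_nf
      _ ≤ |c ^ p - a ^ p| + |b ^ p| := abs_sub _ _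
      _ = |c ^ p - a ^ p| + b ^ p := by rw [abs_of_nonneg h0]
  have hfinal : |c ^ p - b ^ p - a ^ p| ≤ (p + 1) * (a + b) ^ (p - 1) * b := by
    calc |c ^ p - b ^ p - a ^ p| ≤ |c ^ p - a ^ p| + b ^ p := habs
      _ ≤ p * (a + b) ^ (p - 1) * b + (a + b) ^ (p - 1) * b := add_le_add hstep hbp
      _ = (p + 1) * (a + b) ^ (p - 1) * b := by ring
  have h2a : (a + b) ^ (p - 1) ≤ 2 ^ (p - 1) * a ^ (p - 1) := by
    have : a + b ≤ 2 * a := by linarith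
    calc (a + b) ^ (p - 1) ≤ (2 * a) ^ (p - 1) := Real.rpow_le_rpow hab this hp0
      _ = 2 ^ (p - 1) * a ^ (p - 1) := Real.mul_rpow (by norm_num) ha
  calc |c ^ p - b ^ p - a ^ p| ≤ (p + 1) * (a + b) ^ (p - 1) * b := hfinal
    _ ≤ (p + 1) * (2 ^ (p - 1) * a ^ (p - 1)) * b := by
        apply mul_le_mul_of_nonneg_right _ hb
        exact mul_le_mul_of_nonneg_left h2a (by linarith)
    _ = (p + 1) * 2 ^ (p - 1) * (a ^ (p - 1) * b) := by ring

/-- For every `p > 0` there is `C > 0`, depending only on `p`, such that for all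
`x, y ∈ ℝ^n` and all `θ ∈ [0,1]`: if `0 < p ≤ 1` then
`| ‖x−y‖^p − ‖y‖^p − ‖x‖^p | ≤ C ‖x‖^{pθ} ‖y‖^{p(1−θ)}`, and if `p > 1` then
`| ‖x−y‖^p − ‖y‖^p − ‖x‖^p | ≤ C (‖x‖^{p−1}‖y‖ + ‖x‖‖y‖^{p−1})`. -/
theorem stmt5 (p : ℝ) (hp : 0 < p) :
    ∃ C : ℝ, 0 < C ∧ ∀ (n : ℕ) (x y : EuclideanSpace ℝ (Fin n)),
      (p ≤ 1 → ∀ θ : ℝ, 0 ≤ θ → θ ≤ 1 →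
        |‖x - y‖ ^ p - ‖y‖ ^ p - ‖x‖ ^ p| ≤ C * (‖x‖ ^ (p * θ) * ‖y‖ ^ (p * (1 - θ)))) ∧
      (1 < p →
        |‖x - y‖ ^ p - ‖y‖ ^ p - ‖x‖ ^ p| ≤
          C * (‖x‖ ^ (p - 1) * ‖y‖ + ‖x‖ * ‖y‖ ^ (p - 1))) := by
  have h2p : (1:ℝ) ≤ 2 ^ p := Real.one_le_rpow (by norm_num) hp.le
  refine ⟨(p + 2) * 2 ^ p, by positivity, fun n x y => ?_⟩
  set a := ‖x‖ with ha_def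
  set b := ‖y‖ with hb_def
  set c := ‖x - y‖ with hc_def
  have ha : 0 ≤ a := norm_nonneg _
  have hb : 0 ≤ b := norm_nonneg _
  have hc : 0 ≤ c := norm_nonneg _
  have h1 : c ≤ a + b := norm_sub_le _ _
  have habs : |a - b| ≤ c := abs_norm_sub_norm_le _ _
  have h2 : a ≤ c + b := by have := abs_le.1 habs; linarith [this.2]
  have h3 : b ≤ c + a := by have := abs_le.1 habs; linarith [this.1]
  constructor
  · intro hp1 θ hθ0 hθ1
    have hpθ : 0 ≤ p * θ := mul_nonneg hp.le hθ0
    have hpθ' : 0 ≤ p * (1 - θ) := mul_nonneg hp.le (by linarith)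
    rcases eq_or_lt_of_le ha with ha0 | ha0
    · -- a = 0 : x = 0, c = b, expression vanishes
      have hx : x = 0 := norm_eq_zero.1 ha0.symm
      have hcb : c = b := by rw [hc_def, hx, zero_sub, norm_neg]
      have h0p : (0:ℝ) ^ p = 0 := Real.zero_rpow hp.ne'
      rw [hcb, ← ha0, h0p]
      simp only [sub_self, zero_sub, abs_neg, abs_zero]
      positivity
    rcases eq_or_lt_of_le hb with hb0 | hb0
    · have hy : y = 0 := norm_eq_zero.1 hb0.symm
      have hca : c = a := by rw [hc_def, hy, sub_zero]
      have h0p : (0:ℝ) ^ p = 0 := Real.zero_rpow hp.ne'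
      rw [hca, ← hb0, h0p]
      simp only [sub_zero, sub_self, abs_zero]
      positivity
    -- both positive
    have hm : 0 < min a b := lt_min ha0 hb0
    have hkey : |c ^ p - b ^ p - a ^ p| ≤ 2 * (min a b) ^ p := by
      rcases le_total a b with h | h
      · rw [min_eq_left h]; exact my_key1 hp hp1 ha hb hc h1 (by linarith)
      · rw [min_eq_right h]
        have : |c ^ p - b ^ p - a ^ p| = |c ^ p - a ^ p - b ^ p| := by ring_nf
        rw [this]
        exact my_key1 hp hp1 hb ha hc (by linarith) (by linarith)
    have hsplit : (min a b) ^ p = (min a b) ^ (p * θ) * (min a b) ^ (p * (1 - θ)) := by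
      rw [← Real.rpow_add hm]; ring_nf
    have hprod : (min a b) ^ p ≤ a ^ (p * θ) * b ^ (p * (1 - θ)) := by
      rw [hsplit]
      apply mul_le_mul
      · exact Real.rpow_le_rpow hm.le (min_le_left a b) hpθ
      · exact Real.rpow_le_rpow hm.le (min_le_right a b) hpθ'
      · positivity
      · positivity
    have hC2 : (2:ℝ) ≤ (p + 2) * 2 ^ p := by nlinarith
    calc |c ^ p - b ^ p - a ^ p| ≤ 2 * (min a b) ^ p := hkey
      _ ≤ 2 * (a ^ (p * θ) * b ^ (p * (1 - θ))) := by
          exact mul_le_mul_of_nonneg_left hprod (by norm_num)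
      _ ≤ (p + 2) * 2 ^ p * (a ^ (p * θ) * b ^ (p * (1 - θ))) := by
          apply mul_le_mul_of_nonneg_right hC2; positivity
  · intro hp1
    have hCk : (p + 1) * 2 ^ (p - 1) ≤ (p + 2) * 2 ^ p := by
      have h21 : (2:ℝ) ^ (p - 1) ≤ 2 ^ p :=
        Real.rpow_le_rpow_of_exponent_le (by norm_num) (by linarith)
      have h2pos : (0:ℝ) < 2 ^ (p - 1) := Real.rpow_pos_of_pos (by norm_num) _
      nlinarith
    rcases le_total b a with h | h
    · have := my_key2 hp1 ha hb hc h h1 h2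
      have hterm : 0 ≤ a * b ^ (p - 1) := by positivity
      have hmono : (p + 1) * 2 ^ (p - 1) * (a ^ (p - 1) * b) ≤
          (p + 2) * 2 ^ p * (a ^ (p - 1) * b) := by
        apply mul_le_mul_of_nonneg_right hCk; positivity
      calc |c ^ p - b ^ p - a ^ p| ≤ (p + 1) * 2 ^ (p - 1) * (a ^ (p - 1) * b) := this
        _ ≤ (p + 2) * 2 ^ p * (a ^ (p - 1) * b) := hmono
        _ ≤ (p + 2) * 2 ^ p * (a ^ (p - 1) * b + a * b ^ (p - 1)) := by
            apply mul_le_mul_of_nonneg_left _ (by positivity)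
            linarith
    · have heq : |c ^ p - b ^ p - a ^ p| = |c ^ p - a ^ p - b ^ p| := by ring_nf
      rw [heq]
      have := my_key2 hp1 hb ha hc h (by linarith) (by linarith)
      have hterm : 0 ≤ a ^ (p - 1) * b := by positivity
      have hmono : (p + 1) * 2 ^ (p - 1) * (b ^ (p - 1) * a) ≤
          (p + 2) * 2 ^ p * (b ^ (p - 1) * a) := by
        apply mul_le_mul_of_nonneg_right hCk; positivity
      calc |c ^ p - a ^ p - b ^ p| ≤ (p + 1) * 2 ^ (p - 1) * (b ^ (p - 1) * a) := this
        _ ≤ (p + 2) * 2 ^ p * (b ^ (p - 1) * a) := hmono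
        _ ≤ (p + 2) * 2 ^ p * (a ^ (p - 1) * b + a * b ^ (p - 1)) := by
            apply mul_le_mul_of_nonneg_left _ (by positivity)
            linarith [hterm]
end

section
/- Let n ≥ 1 and let s > 0 be a non-integer real number, with m = ⌊s⌋ and σ = s − m ∈ (0,1). There exists a constant C > 0, depending only on n and s, such that for every Schwartz function v on ℝ^n, every x ∈ ℝ^n, and every r > 0: [v]²_{B_r(x), s} ≤ C · Σ_{k ≤ −1} [v]²_{A_k, s}, where the sum runs over all integers k ≤ −1 and A_k := B_{2^{k+1}r}(x) ∖ B_{2^{k−1}r}(x); the inequality is read in [0,∞]. -/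
open MeasureTheory
open scoped ENNReal

/-- The squared Gagliardo-type seminorm `[v]²_{D,s}` for non-integer `s > 0` with
`m = ⌊s⌋` and `σ = s − m`:
`[v]²_{D,s} = ∫_D ∫_D ‖∇^m v(z₁) − ∇^m v(z₂)‖² / |z₁ − z₂|^{n+2σ} dz₁ dz₂` (in `[0,∞]`). -/
noncomputable def semiNormSq (n : ℕ) (s : ℝ) (D : Set (EuclideanSpace ℝ (Fin n)))
    (v : EuclideanSpace ℝ (Fin n) → ℝ) : ℝ≥0∞ :=
  ∫⁻ z₁ in D, ∫⁻ z₂ in D,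
    ENNReal.ofReal
      (‖iteratedFDeriv ℝ ⌊s⌋₊ v z₁ - iteratedFDeriv ℝ ⌊s⌋₊ v z₂‖ ^ 2 /
        ‖z₁ - z₂‖ ^ ((n : ℝ) + 2 * (s - ⌊s⌋₊)))

/-!
Cut `B_r(x) \ {x}` into the dyadic shells `D_k = B_{2^k r}(x) \ B_{2^(k-1) r}(x)`, `k ≤ 0`, so
that the energy on `B_r(x)` is the sum of the energies on all pairs `D_j × D_k`. Pairs of equal
or adjacent shells lie in one annulus `A_k`. For `j + 2 ≤ k` the kernel is at most
`(2^(k-2) r)^(-p)` times `‖F z₁ - F z₂‖²`, and the mean of `‖F z₁ - F z₂‖²` over `D_j × D_k` is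
controlled by chaining through the intermediate shells with
`‖a - b‖² ≤ 3 ‖a - w‖² + (3/2) ‖w - b‖²`; each adjacent mean is in turn bounded by the energy of
an annulus. Since `|D_k| ∝ 2^(n k)` and `p = n + 2σ`, the weight with which `A_{j+u}` enters the
pair `(j, j + u + w + 1)` is `≲ (3 / 2^(n+1))^u (2^(-2σ))^w`, a summable double geometric series.
-/

open Metric Set Function Finset Module

namespace DyadicGagliardo

section DoubleIntegral

variable {α : Type*} [MeasurableSpace α] {μ : Measure α}

theorem setLIntegral_setLIntegral_mono_set {f : α → α → ℝ≥0∞} {S T S' T' : Set α}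
    (hS : S ⊆ S') (hT : T ⊆ T') :
    ∫⁻ a in S, ∫⁻ b in T, f a b ∂μ ∂μ ≤ ∫⁻ a in S', ∫⁻ b in T', f a b ∂μ ∂μ :=
  (lintegral_mono fun _ => lintegral_mono_set hT).trans (lintegral_mono_set hS)

theorem setLIntegral_setLIntegral_le_const_mul {f g : α → α → ℝ≥0∞} {S T : Set α}
    (hS : MeasurableSet S) (hT : MeasurableSet T) {c : ℝ≥0∞} (hc : c ≠ ∞)
    (hfg : ∀ a ∈ S, ∀ b ∈ T, f a b ≤ c * g a b) :
    ∫⁻ a in S, ∫⁻ b in T, f a b ∂μ ∂μ ≤ c * ∫⁻ a in S, ∫⁻ b in T, g a b ∂μ ∂μ := by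
  rw [← lintegral_const_mul' _ _ hc]
  refine setLIntegral_mono' hS fun a ha => ?_
  rw [← lintegral_const_mul' _ _ hc]
  exact setLIntegral_mono' hT fun b hb => hfg a ha b hb

noncomputable def doubleAverage (μ : Measure α) (g : α → α → ℝ≥0∞) (S T : Set α) : ℝ≥0∞ :=
  (μ S * μ T)⁻¹ * ∫⁻ a in S, ∫⁻ b in T, g a b ∂μ ∂μ

theorem setLIntegral_setLIntegral_eq_mul_doubleAverage {g : α → α → ℝ≥0∞} {S T : Set α}
    (hS₀ : μ S ≠ 0) (hS : μ S ≠ ∞) (hT₀ : μ T ≠ 0) (hT : μ T ≠ ∞) :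
    ∫⁻ a in S, ∫⁻ b in T, g a b ∂μ ∂μ = μ S * μ T * doubleAverage μ g S T := by
  rw [doubleAverage, ← mul_assoc, ENNReal.mul_inv_cancel (mul_ne_zero hS₀ hT₀)
    (ENNReal.mul_ne_top hS hT), one_mul]

variable [SFinite μ]

theorem measure_mul_setLIntegral_setLIntegral_le {g : α → α → ℝ≥0∞}
    (hg : Measurable (uncurry g)) {c₁ c₂ : ℝ≥0∞}
    (hchain : ∀ a b w, g a b ≤ c₁ * g a w + c₂ * g w b) (S T W : Set α) :
    μ W * ∫⁻ a in S, ∫⁻ b in T, g a b ∂μ ∂μ ≤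
      c₁ * μ T * ∫⁻ a in S, ∫⁻ w in W, g a w ∂μ ∂μ +
        c₂ * μ S * ∫⁻ w in W, ∫⁻ b in T, g w b ∂μ ∂μ := by
  have hg₁ : ∀ a, Measurable (g a) := fun a => hg.comp measurable_prodMk_left
  have hg₂ : ∀ b, Measurable fun w => g w b := fun b => hg.comp measurable_prodMk_right
  have hpoint : ∀ a b, μ W * g a b ≤
      c₁ * ∫⁻ w in W, g a w ∂μ + c₂ * ∫⁻ w in W, g w b ∂μ := fun a b => by
    rw [← lintegral_const_mul _ (hg₁ a), ← lintegral_const_mul _ (hg₂ b),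
      ← lintegral_add_left ((hg₁ a).const_mul _), mul_comm, ← setLIntegral_const]
    exact lintegral_mono fun w => hchain a b w
  have hswap : ∫⁻ b in T, ∫⁻ w in W, g w b ∂μ ∂μ = ∫⁻ w in W, ∫⁻ b in T, g w b ∂μ ∂μ :=
    lintegral_lintegral_swap (hg.comp measurable_swap).aemeasurable
  have hI₁ : ∀ V : Set α, Measurable fun a => ∫⁻ b in V, g a b ∂μ := fun V =>
    hg.lintegral_prod_right'
  have hI₂ : Measurable fun b => ∫⁻ w in W, g w b ∂μ :=
    (hg.comp measurable_swap).lintegral_prod_right'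
  calc μ W * ∫⁻ a in S, ∫⁻ b in T, g a b ∂μ ∂μ
      = ∫⁻ a in S, ∫⁻ b in T, μ W * g a b ∂μ ∂μ := by
        rw [← lintegral_const_mul _ (hI₁ T)]
        refine lintegral_congr fun a => ?_
        rw [lintegral_const_mul _ (hg₁ a)]
    _ ≤ ∫⁻ a in S, ∫⁻ b in T,
          (c₁ * ∫⁻ w in W, g a w ∂μ + c₂ * ∫⁻ w in W, g w b ∂μ) ∂μ ∂μ :=
        lintegral_mono fun a => lintegral_mono fun b => hpoint a b
    _ = ∫⁻ a in S, (c₁ * μ T * ∫⁻ w in W, g a w ∂μ +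
          c₂ * ∫⁻ w in W, ∫⁻ b in T, g w b ∂μ ∂μ) ∂μ := by
        refine lintegral_congr fun a => ?_
        rw [lintegral_add_right _ (hI₂.const_mul _), setLIntegral_const,
          lintegral_const_mul _ hI₂, hswap, mul_right_comm]
    _ = c₁ * μ T * ∫⁻ a in S, ∫⁻ w in W, g a w ∂μ ∂μ +
          c₂ * μ S * ∫⁻ w in W, ∫⁻ b in T, g w b ∂μ ∂μ := by
        rw [lintegral_add_left ((hI₁ W).const_mul _), lintegral_const_mul _ (hI₁ W),
          setLIntegral_const]
        ring

theorem doubleAverage_le_of_chain {g : α → α → ℝ≥0∞} (hg : Measurable (uncurry g))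
    {c₁ c₂ : ℝ≥0∞} (hchain : ∀ a b w, g a b ≤ c₁ * g a w + c₂ * g w b) {S T W : Set α}
    (hS₀ : μ S ≠ 0) (hS : μ S ≠ ∞) (hT₀ : μ T ≠ 0) (hT : μ T ≠ ∞)
    (hW₀ : μ W ≠ 0) (hW : μ W ≠ ∞) :
    doubleAverage μ g S T ≤ c₁ * doubleAverage μ g S W + c₂ * doubleAverage μ g W T := by
  have hmul : ∀ {U V : Set α}, μ U ≠ 0 → μ U ≠ ∞ → μ V ≠ 0 → μ V ≠ ∞ →
      μ U * μ V * doubleAverage μ g U V = ∫⁻ a in U, ∫⁻ b in V, g a b ∂μ ∂μ :=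
    fun hU₀ hU hV₀ hV => (setLIntegral_setLIntegral_eq_mul_doubleAverage hU₀ hU hV₀ hV).symm
  rw [← ENNReal.mul_le_mul_iff_right (mul_ne_zero (mul_ne_zero hS₀ hT₀) hW₀)
    (ENNReal.mul_ne_top (ENNReal.mul_ne_top hS hT) hW)]
  calc μ S * μ T * μ W * doubleAverage μ g S T
      = μ W * (μ S * μ T * doubleAverage μ g S T) := by ring
    _ ≤ c₁ * μ T * (μ S * μ W * doubleAverage μ g S W) +
          c₂ * μ S * (μ W * μ T * doubleAverage μ g W T) := by
        rw [hmul hS₀ hS hT₀ hT, hmul hS₀ hS hW₀ hW, hmul hW₀ hW hT₀ hT]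
        exact measure_mul_setLIntegral_setLIntegral_le hg hchain S T W
    _ = μ S * μ T * μ W * (c₁ * doubleAverage μ g S W + c₂ * doubleAverage μ g W T) := by ring

theorem setLIntegral_setLIntegral_iUnion {g : α → α → ℝ≥0∞} (hg : Measurable (uncurry g))
    {S : ℕ → Set α} (hS : ∀ i, MeasurableSet (S i)) (hdisj : Pairwise (Disjoint on S)) :
    ∫⁻ a in ⋃ i, S i, ∫⁻ b in ⋃ i, S i, g a b ∂μ ∂μ =
      ∑' ij : ℕ × ℕ, ∫⁻ a in S ij.1, ∫⁻ b in S ij.2, g a b ∂μ ∂μ := by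
  simp_rw [lintegral_iUnion hS hdisj]
  rw [ENNReal.tsum_prod']
  exact tsum_congr fun i => lintegral_tsum fun j => hg.lintegral_prod_right'.aemeasurable

end DoubleIntegral

section Summation

theorem le_sum_antidiagonal_of_chain {q : ℤ → ℤ → ℝ≥0∞} {c₁ c₂ : ℝ≥0∞} (hc₁ : 1 ≤ c₁)
    (hchain : ∀ j k, q j k ≤ c₁ * q j (j + 1) + c₂ * q (j + 1) k) (d : ℕ) (j : ℤ) :
    q j (j + d + 1) ≤ ∑ uw ∈ antidiagonal d, c₁ * c₂ ^ uw.1 * q (j + uw.1) (j + uw.1 + 1) := by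
  induction d generalizing j with
  | zero => simpa using le_mul_of_one_le_left' hc₁
  | succ d ih =>
    rw [Nat.sum_antidiagonal_succ]
    have hk : j + ↑(d + 1) + 1 = j + 1 + d + 1 := by push_cast; ring
    calc q j (j + ↑(d + 1) + 1)
        ≤ c₁ * q j (j + 1) + c₂ * q (j + 1) (j + 1 + d + 1) := hk ▸ hchain _ _
      _ ≤ c₁ * q j (j + 1) + c₂ * ∑ uw ∈ antidiagonal d,
            c₁ * c₂ ^ uw.1 * q (j + 1 + uw.1) (j + 1 + uw.1 + 1) := by gcongr; exact ih _
      _ = _ := by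
        simp only [Nat.cast_zero, add_zero, pow_zero, mul_one, mul_sum, Nat.cast_add,
          Nat.cast_one, pow_succ]
        congr 1
        refine sum_congr rfl fun uw _ => ?_
        rw [show j + (uw.1 + 1 : ℤ) = j + 1 + uw.1 by ring]
        ring

theorem tsum_prod_le_diag_add_offDiag (f : ℕ × ℕ → ℝ≥0∞) :
    ∑' q, f q ≤ ∑' a, f (a, a) + ∑' be : ℕ × ℕ, f (be.1 + be.2 + 1, be.1) +
      ∑' be : ℕ × ℕ, f (be.1, be.1 + be.2 + 1) := by
  let φ : ℕ ⊕ (ℕ × ℕ) ⊕ (ℕ × ℕ) → ℕ × ℕ :=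
    Sum.elim (fun a => (a, a))
      (Sum.elim (fun be => (be.1 + be.2 + 1, be.1)) fun be => (be.1, be.1 + be.2 + 1))
  have hφ : Surjective φ := by
    rintro ⟨a, b⟩
    rcases lt_trichotomy a b with h | rfl | h
    · exact ⟨.inr (.inr (a, b - a - 1)), by simp [φ]; omega⟩
    · exact ⟨.inl a, rfl⟩
    · exact ⟨.inr (.inl (b, a - b - 1)), by simp [φ]; omega⟩
  refine (ENNReal.tsum_le_tsum_comp_of_surjective hφ f).trans_eq ?_
  rw [ENNReal.summable.tsum_sum ENNReal.summable, ENNReal.summable.tsum_sum ENNReal.summable,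
    add_assoc]
  rfl

theorem tsum_sum_antidiagonal_eq_tsum_prod (f : ℕ × ℕ → ℝ≥0∞) :
    ∑' e, ∑ uw ∈ antidiagonal e, f uw = ∑' uw, f uw := by
  rw [← HasAntidiagonal.sigmaAntidiagonalEquivProd.tsum_eq, ENNReal.tsum_sigma']
  exact tsum_congr fun e => (Finset.tsum_subtype _ f).symm

theorem tsum_tsum_sum_antidiagonal_geometric_le (q₁ q₂ : ℝ≥0∞) (S : ℕ → ℝ≥0∞) :
    ∑' b, ∑' e, ∑ uw ∈ antidiagonal e, q₁ ^ uw.1 * q₂ ^ uw.2 * S (b + uw.2) ≤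
      (1 - q₁)⁻¹ * (1 - q₂)⁻¹ * ∑' i, S i := by
  have hshift : ∀ w, ∑' b, S (b + w) ≤ ∑' i, S i := fun w =>
    ENNReal.tsum_comp_le_tsum_of_injective (add_left_injective w) S
  calc ∑' b, ∑' e, ∑ uw ∈ antidiagonal e, q₁ ^ uw.1 * q₂ ^ uw.2 * S (b + uw.2)
      = ∑' u, q₁ ^ u * ∑' w, q₂ ^ w * ∑' b, S (b + w) := by
        simp_rw [tsum_sum_antidiagonal_eq_tsum_prod, ENNReal.tsum_prod', ← ENNReal.tsum_mul_left,
          mul_assoc]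
        rw [ENNReal.tsum_comm]
        exact tsum_congr fun u => ENNReal.tsum_comm
    _ ≤ ∑' u, q₁ ^ u * ∑' w, q₂ ^ w * ∑' i, S i :=
        ENNReal.tsum_le_tsum fun u =>
          mul_le_mul_right (ENNReal.tsum_le_tsum fun w => mul_le_mul_right (hshift w) _) _
    _ = (1 - q₁)⁻¹ * (1 - q₂)⁻¹ * ∑' i, S i := by
        rw [ENNReal.tsum_mul_right, ENNReal.tsum_mul_right, ENNReal.tsum_geometric,
          ENNReal.tsum_geometric, mul_assoc]

end Summation

section Shells

variable {E : Type*} [NormedAddCommGroup E] {x : E} {r : ℝ}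

def dyadicShell (x : E) (r : ℝ) (k : ℤ) : Set E :=
  ball x (2 ^ k * r) \ ball x (2 ^ (k - 1) * r)

def dyadicAnnulus (x : E) (r : ℝ) (k : ℤ) : Set E :=
  ball x (2 ^ (k + 1) * r) \ ball x (2 ^ (k - 1) * r)

theorem mem_dyadicShell {k : ℤ} {z : E} :
    z ∈ dyadicShell x r k ↔ 2 ^ (k - 1) * r ≤ dist z x ∧ dist z x < 2 ^ k * r := by
  rw [dyadicShell, mem_sdiff, mem_ball, mem_ball, not_lt, and_comm]

theorem mem_dyadicAnnulus {k : ℤ} {z : E} :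
    z ∈ dyadicAnnulus x r k ↔ 2 ^ (k - 1) * r ≤ dist z x ∧ dist z x < 2 ^ (k + 1) * r := by
  rw [dyadicAnnulus, mem_sdiff, mem_ball, mem_ball, not_lt, and_comm]

theorem measurableSet_dyadicShell [MeasurableSpace E] [OpensMeasurableSpace E] (k : ℤ) :
    MeasurableSet (dyadicShell x r k) :=
  measurableSet_ball.diff measurableSet_ball

theorem measurableSet_dyadicAnnulus [MeasurableSpace E] [OpensMeasurableSpace E] (k : ℤ) :
    MeasurableSet (dyadicAnnulus x r k) :=
  measurableSet_ball.diff measurableSet_ball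

theorem two_zpow_mul_le_two_zpow_mul (hr : 0 ≤ r) {j k : ℤ} (hjk : j ≤ k) :
    (2 : ℝ) ^ j * r ≤ 2 ^ k * r :=
  mul_le_mul_of_nonneg_right (zpow_le_zpow_right₀ one_le_two hjk) hr

theorem dyadicShell_subset_dyadicAnnulus (hr : 0 ≤ r) (k : ℤ) :
    dyadicShell x r k ⊆ dyadicAnnulus x r k := fun z hz => by
  rw [mem_dyadicShell] at hz
  rw [mem_dyadicAnnulus]
  exact ⟨hz.1, hz.2.trans_le (two_zpow_mul_le_two_zpow_mul hr (by omega))⟩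

theorem dyadicShell_succ_subset_dyadicAnnulus (hr : 0 ≤ r) (k : ℤ) :
    dyadicShell x r (k + 1) ⊆ dyadicAnnulus x r k := fun z hz => by
  rw [mem_dyadicShell, add_sub_cancel_right] at hz
  rw [mem_dyadicAnnulus]
  exact ⟨(two_zpow_mul_le_two_zpow_mul hr (by omega)).trans hz.1, hz.2⟩

theorem dist_le_of_mem_dyadicAnnulus {k : ℤ} {z₁ z₂ : E} (h₁ : z₁ ∈ dyadicAnnulus x r k)
    (h₂ : z₂ ∈ dyadicAnnulus x r k) : dist z₁ z₂ ≤ 2 ^ (k + 2) * r := by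
  rw [mem_dyadicAnnulus] at h₁ h₂
  have h : (2 : ℝ) ^ (k + 2) * r = 2 ^ (k + 1) * r + 2 ^ (k + 1) * r := by
    rw [show k + 2 = k + 1 + 1 by ring, zpow_add_one₀ two_ne_zero]; ring
  linarith [dist_triangle_right z₁ z₂ x]

theorem le_dist_of_mem_dyadicShell (hr : 0 ≤ r) {j k : ℤ} (hjk : j + 2 ≤ k) {z₁ z₂ : E}
    (h₁ : z₁ ∈ dyadicShell x r j) (h₂ : z₂ ∈ dyadicShell x r k) :
    2 ^ (k - 2) * r ≤ dist z₁ z₂ := by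
  rw [mem_dyadicShell] at h₁ h₂
  have h : (2 : ℝ) ^ (k - 1) * r = 2 ^ (k - 2) * r + 2 ^ (k - 2) * r := by
    rw [show k - 1 = k - 2 + 1 by ring, zpow_add_one₀ two_ne_zero]; ring
  have hj := two_zpow_mul_le_two_zpow_mul hr (show j ≤ k - 2 by omega)
  linarith [dist_triangle_left z₂ x z₁, dist_comm z₁ z₂]

theorem pairwise_disjoint_dyadicShell (hr : 0 ≤ r) :
    Pairwise (Disjoint on dyadicShell x r) := by
  suffices ∀ {j k : ℤ}, j < k → Disjoint (dyadicShell x r j) (dyadicShell x r k) from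
    fun j k hjk => hjk.lt_or_gt.elim this fun h => (this h).symm
  intro j k hjk
  refine Set.disjoint_left.2 fun z h₁ h₂ => ?_
  rw [mem_dyadicShell] at h₁ h₂
  linarith [two_zpow_mul_le_two_zpow_mul hr (show j ≤ k - 1 by omega)]

theorem iUnion_dyadicShell_neg (hr : 0 < r) :
    ⋃ i : ℕ, dyadicShell x r (-i) = ball x r \ {x} := by
  ext z
  simp only [mem_iUnion, mem_sdiff, mem_ball, mem_singleton_iff]
  constructor
  · rintro ⟨i, hi⟩
    rw [mem_dyadicShell] at hi
    refine ⟨hi.2.trans_le ?_, fun hzx => ?_⟩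
    · simpa using two_zpow_mul_le_two_zpow_mul hr.le (show -(i : ℤ) ≤ 0 by omega)
    · rw [hzx, dist_self] at hi
      exact (mul_pos (zpow_pos two_pos _) hr).not_ge hi.1
  · rintro ⟨hzr, hzx⟩
    obtain ⟨m, hm₁, hm₂⟩ := exists_mem_Ico_zpow (div_pos (dist_pos.2 hzx) hr) one_lt_two
    rw [le_div_iff₀ hr] at hm₁
    rw [div_lt_iff₀ hr] at hm₂
    have hm : m + 1 ≤ 0 := by
      by_contra! h
      have := two_zpow_mul_le_two_zpow_mul hr.le (show (0 : ℤ) ≤ m by omega)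
      rw [zpow_zero, one_mul] at this
      linarith
    refine ⟨(-(m + 1)).toNat, ?_⟩
    rw [mem_dyadicShell, Int.toNat_of_nonneg (by omega), neg_neg, add_sub_cancel_right]
    exact ⟨hm₁, hm₂⟩

variable [NormedSpace ℝ E] [FiniteDimensional ℝ E] [MeasurableSpace E] (μ : Measure E)
  [μ.IsAddHaarMeasure]

theorem measure_dyadicShell_ne_top (k : ℤ) : μ (dyadicShell x r k) ≠ ∞ :=
  ((measure_mono sdiff_subset).trans_lt measure_ball_lt_top).ne

variable [BorelSpace E] [Nontrivial E]

theorem measure_dyadicShell (hr : 0 < r) (k : ℤ) :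
    μ (dyadicShell x r k) = ENNReal.ofReal ((2 ^ k * r) ^ finrank ℝ E) *
      (ENNReal.ofReal (1 - 2⁻¹ ^ finrank ℝ E) * μ (ball 0 1)) := by
  have hsub : ball x (2 ^ (k - 1) * r) ⊆ ball x (2 ^ k * r) :=
    ball_subset_ball (two_zpow_mul_le_two_zpow_mul hr.le (by omega))
  rw [dyadicShell, measure_sdiff hsub measurableSet_ball.nullMeasurableSet measure_ball_lt_top.ne,
    Measure.addHaar_ball μ x (r := 2 ^ k * r) (by positivity),
    Measure.addHaar_ball μ x (r := 2 ^ (k - 1) * r) (by positivity),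
    ← ENNReal.sub_mul fun _ _ => measure_ball_lt_top.ne, ← ENNReal.ofReal_sub _ (by positivity),
    ← mul_assoc, ← ENNReal.ofReal_mul (by positivity), zpow_sub_one₀ two_ne_zero]
  congr 2
  ring

theorem measure_dyadicShell_ne_zero (hr : 0 < r) (k : ℤ) : μ (dyadicShell x r k) ≠ 0 := by
  have hn : (2⁻¹ : ℝ) ^ finrank ℝ E < 1 := pow_lt_one₀ (by norm_num) (by norm_num) finrank_pos.ne'
  rw [measure_dyadicShell μ hr]
  refine mul_ne_zero ?_ (mul_ne_zero ?_ (measure_ball_pos μ 0 one_pos).ne')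
  all_goals rw [Ne, ENNReal.ofReal_eq_zero, not_le]
  · positivity
  · linarith

end Shells

section Kernel

variable {E Y : Type*} [SeminormedAddCommGroup Y]

noncomputable def sqDiff (F : E → Y) (z₁ z₂ : E) : ℝ≥0∞ :=
  ENNReal.ofReal (‖F z₁ - F z₂‖ ^ 2)

/-- The weights come from `2 s t ≤ 2 s² + t² / 2`. -/
theorem sqDiff_le_three_mul_add (F : E → Y) (a b w : E) :
    sqDiff F a b ≤ 3 * sqDiff F a w + 3 / 2 * sqDiff F w b := by
  have h3 : (3 : ℝ≥0∞) = ENNReal.ofReal 3 := by norm_num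
  have h32 : (3 / 2 : ℝ≥0∞) = ENNReal.ofReal (3 / 2) := by
    rw [ENNReal.ofReal_div_of_pos two_pos]; norm_num
  rw [sqDiff, sqDiff, sqDiff, h32, h3, ← ENNReal.ofReal_mul (by norm_num),
    ← ENNReal.ofReal_mul (by norm_num), ← ENNReal.ofReal_add (by positivity) (by positivity)]
  refine ENNReal.ofReal_le_ofReal ?_
  have htri := norm_sub_le_norm_sub_add_norm_sub (F a) (F w) (F b)
  nlinarith [sq_nonneg (‖F a - F w‖ - ‖F w - F b‖ / 2), norm_nonneg (F a - F b)]

variable [NormedAddCommGroup E]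

noncomputable def gagliardoKernel (p : ℝ) (F : E → Y) (z₁ z₂ : E) : ℝ≥0∞ :=
  ENNReal.ofReal (‖F z₁ - F z₂‖ ^ 2 / ‖z₁ - z₂‖ ^ p)

variable {p : ℝ} {F : E → Y}

theorem gagliardoKernel_comm (z₁ z₂ : E) :
    gagliardoKernel p F z₁ z₂ = gagliardoKernel p F z₂ z₁ := by
  rw [gagliardoKernel, gagliardoKernel, norm_sub_rev, norm_sub_rev z₁]

theorem gagliardoKernel_le_of_le_norm (hp : 0 ≤ p) {M : ℝ} (hM : 0 < M) {z₁ z₂ : E}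
    (h : M ≤ ‖z₁ - z₂‖) :
    gagliardoKernel p F z₁ z₂ ≤ ENNReal.ofReal ((M ^ p)⁻¹) * sqDiff F z₁ z₂ := by
  rw [gagliardoKernel, sqDiff, ← ENNReal.ofReal_mul (inv_nonneg.2 (Real.rpow_nonneg hM.le p)),
    inv_mul_eq_div]
  exact ENNReal.ofReal_le_ofReal <| div_le_div_of_nonneg_left (by positivity)
    (by positivity) (Real.rpow_le_rpow hM.le h hp)

theorem sqDiff_le_of_norm_le (hp : 0 ≤ p) {M : ℝ} {z₁ z₂ : E} (h : ‖z₁ - z₂‖ ≤ M) :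
    sqDiff F z₁ z₂ ≤ ENNReal.ofReal (M ^ p) * gagliardoKernel p F z₁ z₂ := by
  rcases eq_or_ne z₁ z₂ with rfl | hne
  · simp [sqDiff]
  have hpos : 0 < ‖z₁ - z₂‖ ^ p := Real.rpow_pos_of_pos (norm_pos_iff.2 (sub_ne_zero.2 hne)) p
  rw [gagliardoKernel, sqDiff, ← ENNReal.ofReal_mul (Real.rpow_nonneg ((norm_nonneg _).trans h) p)]
  refine ENNReal.ofReal_le_ofReal ?_
  calc ‖F z₁ - F z₂‖ ^ 2 = ‖z₁ - z₂‖ ^ p * (‖F z₁ - F z₂‖ ^ 2 / ‖z₁ - z₂‖ ^ p) := by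
        rw [mul_div_cancel₀ _ hpos.ne']
    _ ≤ M ^ p * (‖F z₁ - F z₂‖ ^ 2 / ‖z₁ - z₂‖ ^ p) := by
        gcongr

variable [MeasurableSpace E] [BorelSpace E] [SecondCountableTopology E]

theorem measurable_sqDiff (hF : Continuous F) : Measurable (uncurry (sqDiff F)) :=
  ((hF.comp continuous_fst).sub (hF.comp continuous_snd)).norm.pow 2 |>.measurable.ennreal_ofReal

theorem measurable_gagliardoKernel (hF : Continuous F) :
    Measurable (uncurry (gagliardoKernel p F)) :=
  ((((hF.comp continuous_fst).sub (hF.comp continuous_snd)).norm.pow 2).measurable.div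
    ((continuous_fst.sub continuous_snd).norm.measurable.pow_const p)).ennreal_ofReal

end Kernel

theorem two_zpow_coefficient_eq (n u w : ℕ) {p σ r : ℝ} (hp : p = n + 2 * σ) (hr : 0 < r)
    (j : ℤ) :
    ((2 ^ (j + u + w + 1 - 2) * r) ^ p)⁻¹ *
        ((2 ^ j * r) ^ n * (2 ^ (j + u + w + 1) * r) ^ n /
          ((2 ^ (j + u) * r) ^ n * (2 ^ (j + u + 1) * r) ^ n)) *
        (3 * (3 / 2) ^ u) * (2 ^ (j + u + 2) * r) ^ p =
      3 * 2 ^ (3 * p) * (3 / 2 ^ (n + 1)) ^ u * (2 ^ (-(2 * σ))) ^ w := by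
  set a : ℝ := 2 ^ j * r with ha_def
  have ha : 0 < a := by positivity
  have hshift : ∀ m : ℕ, (2 : ℝ) ^ (j + m) * r = 2 ^ m * a := fun m => by
    rw [zpow_add₀ two_ne_zero, zpow_natCast]; ring
  have hpow : ∀ N : ℕ, ((2 : ℝ) ^ N) ^ p = (2 ^ p) ^ N := fun N => by
    rw [← Real.rpow_natCast, ← Real.rpow_mul two_pos.le, mul_comm, Real.rpow_mul two_pos.le,
      Real.rpow_natCast]
  have h4 : (4 : ℝ) ^ p = (2 ^ p) ^ 2 := by rw [show (4 : ℝ) = 2 ^ 2 by norm_num, hpow]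
  have h3 : (2 : ℝ) ^ (3 * p) = (2 ^ p) ^ 3 := by
    rw [mul_comm, Real.rpow_mul two_pos.le, Real.rpow_ofNat]
  have hσ : (2 : ℝ) ^ (-(2 * σ)) = 2 ^ n / 2 ^ p := by
    rw [← Real.rpow_natCast, ← Real.rpow_sub two_pos, hp]; ring_nf
  have hfar : (2 : ℝ) ^ (j + u + w + 1 - 2) * r = 2 ^ (u + w + 1) / 4 * a := by
    rw [zpow_sub₀ two_ne_zero, div_mul_eq_mul_div, show j + u + w + 1 = j + ((u + w + 1 : ℕ) : ℤ)
      by push_cast; ring, hshift]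
    norm_num; ring
  rw [hfar, show j + u + w + 1 = j + ((u + w + 1 : ℕ) : ℤ) by push_cast; ring,
    show j + u + 1 = j + ((u + 1 : ℕ) : ℤ) by push_cast; ring,
    show j + u + 2 = j + ((u + 2 : ℕ) : ℤ) by push_cast; ring, hshift, hshift, hshift, hshift,
    Real.mul_rpow (by positivity) ha.le, Real.mul_rpow (by positivity) ha.le,
    Real.div_rpow (by positivity) (by norm_num), hpow, hpow, h4, h3, hσ]
  have : (0 : ℝ) < a ^ p := by positivity
  have hB : (0 : ℝ) < 2 ^ p := by positivity
  generalize (2 : ℝ) ^ p = B at hB ⊢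
  simp only [div_pow, mul_pow, ← pow_mul]
  field_simp
  ring

section Energy

variable {E Y : Type*} [NormedAddCommGroup E] [SeminormedAddCommGroup Y] [MeasurableSpace E]
  {μ : Measure E} {p : ℝ} {F : E → Y} {x : E} {r : ℝ}

noncomputable def gagliardoEnergy (μ : Measure E) (p : ℝ) (F : E → Y) (S T : Set E) : ℝ≥0∞ :=
  ∫⁻ z₁ in S, ∫⁻ z₂ in T, gagliardoKernel p F z₁ z₂ ∂μ ∂μ

theorem tsum_gagliardoEnergy_dyadicShell_diag_le (hr : 0 < r) :
    ∑' a : ℕ, gagliardoEnergy μ p F (dyadicShell x r (-a)) (dyadicShell x r (-a)) ≤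
      ∑' i : ℕ, gagliardoEnergy μ p F (dyadicAnnulus x r (-1 - i)) (dyadicAnnulus x r (-1 - i)) :=
  ENNReal.tsum_le_tsum fun a => by
    have h := dyadicShell_succ_subset_dyadicAnnulus (x := x) hr.le (-1 - a)
    rw [show -1 - (a : ℤ) + 1 = -a by ring] at h
    exact setLIntegral_setLIntegral_mono_set h h

section Opens

variable [OpensMeasurableSpace E]

theorem gagliardoEnergy_dyadicShell_le_of_far (hp : 0 ≤ p) (hr : 0 < r) {j k : ℤ}
    (hjk : j + 2 ≤ k) :
    gagliardoEnergy μ p F (dyadicShell x r j) (dyadicShell x r k) ≤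
      ENNReal.ofReal (((2 ^ (k - 2) * r) ^ p)⁻¹) *
        ∫⁻ z₁ in dyadicShell x r j, ∫⁻ z₂ in dyadicShell x r k, sqDiff F z₁ z₂ ∂μ ∂μ :=
  setLIntegral_setLIntegral_le_const_mul (measurableSet_dyadicShell _)
    (measurableSet_dyadicShell _) ENNReal.ofReal_ne_top fun _ h₁ _ h₂ =>
      gagliardoKernel_le_of_le_norm hp (by positivity)
        (dist_eq_norm (E := E) _ _ ▸ le_dist_of_mem_dyadicShell hr.le hjk h₁ h₂)

theorem setLIntegral_sqDiff_dyadicShell_succ_le (hp : 0 ≤ p) (hr : 0 < r) (i : ℤ) :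
    ∫⁻ z₁ in dyadicShell x r i, ∫⁻ z₂ in dyadicShell x r (i + 1), sqDiff F z₁ z₂ ∂μ ∂μ ≤
      ENNReal.ofReal ((2 ^ (i + 2) * r) ^ p) *
        gagliardoEnergy μ p F (dyadicAnnulus x r i) (dyadicAnnulus x r i) :=
  (setLIntegral_setLIntegral_mono_set (dyadicShell_subset_dyadicAnnulus hr.le i)
    (dyadicShell_succ_subset_dyadicAnnulus hr.le i)).trans <|
    setLIntegral_setLIntegral_le_const_mul (measurableSet_dyadicAnnulus i)
      (measurableSet_dyadicAnnulus i) ENNReal.ofReal_ne_top fun _ h₁ _ h₂ =>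
        sqDiff_le_of_norm_le hp (dist_eq_norm (E := E) _ _ ▸ dist_le_of_mem_dyadicAnnulus h₁ h₂)

end Opens

section Borel

variable [BorelSpace E] [SecondCountableTopology E] [SFinite μ]

theorem gagliardoEnergy_comm (hF : Continuous F) (S T : Set E) :
    gagliardoEnergy μ p F S T = gagliardoEnergy μ p F T S := by
  rw [gagliardoEnergy, lintegral_lintegral_swap (measurable_gagliardoKernel hF).aemeasurable]
  simp_rw [gagliardoKernel_comm (F := F) (p := p) _ _]
  rfl

theorem gagliardoEnergy_ball_eq_tsum [NullSingletonClass μ] (hF : Continuous F) (hr : 0 < r) :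
    gagliardoEnergy μ p F (ball x r) (ball x r) =
      ∑' ab : ℕ × ℕ, gagliardoEnergy μ p F (dyadicShell x r (-ab.1)) (dyadicShell x r (-ab.2)) := by
  have hae : ball x r =ᵐ[μ] ⋃ i : ℕ, dyadicShell x r (-i) := by
    rw [iUnion_dyadicShell_neg hr]
    exact (sdiff_null_ae_eq_self (measure_singleton x)).symm
  have hdisj : Pairwise (Disjoint on fun i : ℕ => dyadicShell x r (-i)) :=
    (pairwise_disjoint_dyadicShell hr.le).comp_of_injective
      (neg_injective.comp Nat.cast_injective)
  rw [gagliardoEnergy, setLIntegral_congr hae]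
  simp_rw [setLIntegral_congr hae]
  exact setLIntegral_setLIntegral_iUnion (measurable_gagliardoKernel hF)
    (fun _ => measurableSet_dyadicShell _) hdisj

end Borel

variable [NormedSpace ℝ E] [FiniteDimensional ℝ E] [BorelSpace E] [Nontrivial E]
  [μ.IsAddHaarMeasure]

theorem doubleAverage_sqDiff_dyadicShell_le (hF : Continuous F) (hr : 0 < r) (j k : ℤ) :
    doubleAverage μ (sqDiff F) (dyadicShell x r j) (dyadicShell x r k) ≤
      3 * doubleAverage μ (sqDiff F) (dyadicShell x r j) (dyadicShell x r (j + 1)) +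
        3 / 2 * doubleAverage μ (sqDiff F) (dyadicShell x r (j + 1)) (dyadicShell x r k) :=
  doubleAverage_le_of_chain (measurable_sqDiff hF) (sqDiff_le_three_mul_add F)
    (measure_dyadicShell_ne_zero μ hr _) (measure_dyadicShell_ne_top μ _)
    (measure_dyadicShell_ne_zero μ hr _) (measure_dyadicShell_ne_top μ _)
    (measure_dyadicShell_ne_zero μ hr _) (measure_dyadicShell_ne_top μ _)

theorem measure_dyadicShell_mul_mul_inv (hr : 0 < r) (i j k l : ℤ) :
    μ (dyadicShell x r i) * μ (dyadicShell x r j) *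
        (μ (dyadicShell x r k) * μ (dyadicShell x r l))⁻¹ =
      ENNReal.ofReal ((2 ^ i * r) ^ finrank ℝ E * (2 ^ j * r) ^ finrank ℝ E /
        ((2 ^ k * r) ^ finrank ℝ E * (2 ^ l * r) ^ finrank ℝ E)) := by
  rw [← div_eq_mul_inv, eq_comm, ENNReal.eq_div_iff
    (mul_ne_zero (measure_dyadicShell_ne_zero μ hr k) (measure_dyadicShell_ne_zero μ hr l))
    (ENNReal.mul_ne_top (measure_dyadicShell_ne_top μ k) (measure_dyadicShell_ne_top μ l))]
  simp only [measure_dyadicShell μ hr]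
  set κ := ENNReal.ofReal (1 - 2⁻¹ ^ finrank ℝ E) * μ (ball 0 1)
  set n := finrank ℝ E
  have hpos : ∀ m : ℤ, 0 ≤ ((2 : ℝ) ^ m * r) ^ n := fun m => by positivity
  calc ENNReal.ofReal ((2 ^ k * r) ^ n) * κ * (ENNReal.ofReal ((2 ^ l * r) ^ n) * κ) *
        ENNReal.ofReal ((2 ^ i * r) ^ n * (2 ^ j * r) ^ n / ((2 ^ k * r) ^ n * (2 ^ l * r) ^ n))
      = ENNReal.ofReal ((2 ^ k * r) ^ n * (2 ^ l * r) ^ n *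
          ((2 ^ i * r) ^ n * (2 ^ j * r) ^ n / ((2 ^ k * r) ^ n * (2 ^ l * r) ^ n))) * (κ * κ) := by
        rw [ENNReal.ofReal_mul (by positivity), ENNReal.ofReal_mul (hpos k)]; ring
    _ = ENNReal.ofReal ((2 ^ i * r) ^ n) * κ * (ENNReal.ofReal ((2 ^ j * r) ^ n) * κ) := by
        rw [mul_div_cancel₀ _ (by positivity), ENNReal.ofReal_mul (hpos i)]; ring

/-- A far pair `j < k = j + u + w + 1` is chained through the shells `i = j + u` and `i + 1`;
the coefficient collects the kernel bound `(2^(k-2) r)^(-p)`, the volume factor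
`|D_j| |D_k| / (|D_i| |D_{i+1}|)` turning means back into integrals, the chain weight `3 (3/2)^u`
and the bound `(2^(i+2) r)^p` on distances in the annulus `A_i`. -/
theorem dyadic_coefficient_eq {σ : ℝ} (hp : p = finrank ℝ E + 2 * σ) (hr : 0 < r) (j : ℤ)
    (u w : ℕ) :
    ENNReal.ofReal (((2 ^ (j + u + w + 1 - 2) * r) ^ p)⁻¹) *
        (μ (dyadicShell x r j) * μ (dyadicShell x r (j + u + w + 1))) * (3 * (3 / 2) ^ u) *
        ((μ (dyadicShell x r (j + u)) * μ (dyadicShell x r (j + u + 1)))⁻¹ *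
          ENNReal.ofReal ((2 ^ (j + u + 2) * r) ^ p)) =
      ENNReal.ofReal (3 * 2 ^ (3 * p)) * ENNReal.ofReal (3 / 2 ^ (finrank ℝ E + 1)) ^ u *
        ENNReal.ofReal (2 ^ (-(2 * σ))) ^ w := by
  have h3 : (3 * (3 / 2) ^ u : ℝ≥0∞) = ENNReal.ofReal (3 * (3 / 2) ^ u) := by
    rw [ENNReal.ofReal_mul zero_le_three, ENNReal.ofReal_pow (by norm_num),
      ENNReal.ofReal_div_of_pos two_pos]
    norm_num
  calc _ = ENNReal.ofReal (((2 ^ (j + u + w + 1 - 2) * r) ^ p)⁻¹) *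
        (μ (dyadicShell x r j) * μ (dyadicShell x r (j + u + w + 1)) *
          (μ (dyadicShell x r (j + u)) * μ (dyadicShell x r (j + u + 1)))⁻¹) *
        (3 * (3 / 2) ^ u) * ENNReal.ofReal ((2 ^ (j + u + 2) * r) ^ p) := by ring
    _ = _ := by
      rw [measure_dyadicShell_mul_mul_inv hr, h3, ← ENNReal.ofReal_mul (by positivity),
        ← ENNReal.ofReal_mul (by positivity), ← ENNReal.ofReal_mul (by positivity),
        ← ENNReal.ofReal_pow (by positivity), ← ENNReal.ofReal_pow (by positivity),
        ← ENNReal.ofReal_mul (by positivity), ← ENNReal.ofReal_mul (by positivity),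
        two_zpow_coefficient_eq _ _ _ hp hr]

theorem gagliardoEnergy_dyadicShell_le_sum_of_far {σ : ℝ} (hσ : 0 ≤ σ)
    (hp : p = finrank ℝ E + 2 * σ) (hF : Continuous F) (hr : 0 < r) (j : ℤ) (d : ℕ) :
    gagliardoEnergy μ p F (dyadicShell x r j) (dyadicShell x r (j + ↑(d + 1) + 1)) ≤
      ENNReal.ofReal (3 * 2 ^ (3 * p)) * ∑ uw ∈ antidiagonal (d + 1),
        ENNReal.ofReal (3 / 2 ^ (finrank ℝ E + 1)) ^ uw.1 *
          ENNReal.ofReal (2 ^ (-(2 * σ))) ^ uw.2 *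
            gagliardoEnergy μ p F (dyadicAnnulus x r (j + uw.1))
              (dyadicAnnulus x r (j + uw.1)) := by
  have hp₀ : 0 ≤ p := by rw [hp]; positivity
  set k := j + ↑(d + 1) + 1
  calc gagliardoEnergy μ p F (dyadicShell x r j) (dyadicShell x r k)
      ≤ ENNReal.ofReal (((2 ^ (k - 2) * r) ^ p)⁻¹) * (μ (dyadicShell x r j) *
          μ (dyadicShell x r k) * doubleAverage μ (sqDiff F) (dyadicShell x r j)
            (dyadicShell x r k)) := by
        rw [← setLIntegral_setLIntegral_eq_mul_doubleAverage (measure_dyadicShell_ne_zero μ hr _)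
          (measure_dyadicShell_ne_top μ _) (measure_dyadicShell_ne_zero μ hr _)
          (measure_dyadicShell_ne_top μ _)]
        exact gagliardoEnergy_dyadicShell_le_of_far hp₀ hr (by omega)
    _ ≤ ENNReal.ofReal (((2 ^ (k - 2) * r) ^ p)⁻¹) * (μ (dyadicShell x r j) *
          μ (dyadicShell x r k) * ∑ uw ∈ antidiagonal (d + 1), 3 * (3 / 2) ^ uw.1 *
            ((μ (dyadicShell x r (j + uw.1)) * μ (dyadicShell x r (j + uw.1 + 1)))⁻¹ *
              (ENNReal.ofReal ((2 ^ (j + uw.1 + 2) * r) ^ p) *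
                gagliardoEnergy μ p F (dyadicAnnulus x r (j + uw.1))
                  (dyadicAnnulus x r (j + uw.1))))) := by
        gcongr
        refine (le_sum_antidiagonal_of_chain (by norm_num)
          (doubleAverage_sqDiff_dyadicShell_le hF hr) (d + 1) j).trans ?_
        gcongr with uw
        exact mul_le_mul_right (setLIntegral_sqDiff_dyadicShell_succ_le hp₀ hr _) _
    _ = _ := by
        simp only [mul_sum]
        refine sum_congr rfl fun uw huw => ?_
        rw [HasAntidiagonal.mem_antidiagonal] at huw
        conv_rhs => rw [← mul_assoc, ← mul_assoc]
        rw [show k = j + uw.1 + uw.2 + 1 by omega,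
          ← dyadic_coefficient_eq (μ := μ) (x := x) hp hr j uw.1 uw.2]
        ring

theorem gagliardoEnergy_dyadicShell_le_sum {σ : ℝ} (hσ : 0 ≤ σ)
    (hp : p = finrank ℝ E + 2 * σ) (hF : Continuous F) (hr : 0 < r) (j : ℤ) (e : ℕ) :
    gagliardoEnergy μ p F (dyadicShell x r j) (dyadicShell x r (j + e + 1)) ≤
      ENNReal.ofReal (3 * 2 ^ (3 * p)) * ∑ uw ∈ antidiagonal e,
        ENNReal.ofReal (3 / 2 ^ (finrank ℝ E + 1)) ^ uw.1 *
          ENNReal.ofReal (2 ^ (-(2 * σ))) ^ uw.2 *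
            gagliardoEnergy μ p F (dyadicAnnulus x r (j + uw.1))
              (dyadicAnnulus x r (j + uw.1)) := by
  rcases e with _ | d
  · have hK : 1 ≤ ENNReal.ofReal (3 * 2 ^ (3 * p)) := ENNReal.one_le_ofReal.2 <| by
      nlinarith [Real.one_le_rpow one_le_two (show 0 ≤ 3 * p by rw [hp]; positivity)]
    simp only [Nat.cast_zero, add_zero, Nat.antidiagonal_zero, sum_singleton, pow_zero, one_mul]
    exact (setLIntegral_setLIntegral_mono_set (dyadicShell_subset_dyadicAnnulus hr.le j)
      (dyadicShell_succ_subset_dyadicAnnulus hr.le j)).trans (le_mul_of_one_le_left' hK)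
  · exact gagliardoEnergy_dyadicShell_le_sum_of_far hσ hp hF hr j d

noncomputable def dyadicConstant (n : ℕ) (p σ : ℝ) : ℝ≥0∞ :=
  1 + 2 * (ENNReal.ofReal (3 * 2 ^ (3 * p)) *
    ((1 - ENNReal.ofReal (3 / 2 ^ (n + 1)))⁻¹ * (1 - ENNReal.ofReal (2 ^ (-(2 * σ))))⁻¹))

theorem dyadicConstant_ne_top {n : ℕ} (hn : 1 ≤ n) (p : ℝ) {σ : ℝ} (hσ : 0 < σ) :
    dyadicConstant n p σ ≠ ∞ := by
  have hq₁ : (3 : ℝ) / 2 ^ (n + 1) < 1 := by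
    rw [div_lt_one (by positivity)]
    calc (3 : ℝ) < 2 ^ 2 := by norm_num
      _ ≤ 2 ^ (n + 1) := pow_le_pow_right₀ one_le_two (by omega)
  have hq₂ : (2 : ℝ) ^ (-(2 * σ)) < 1 := Real.rpow_lt_one_of_one_lt_of_neg one_lt_two (by linarith)
  have hinv : ∀ {q : ℝ}, q < 1 → (1 - ENNReal.ofReal q)⁻¹ ≠ ∞ := fun hq =>
    ENNReal.inv_ne_top.2 (tsub_pos_of_lt (ENNReal.ofReal_lt_one.2 hq)).ne'
  exact ENNReal.add_ne_top.2 ⟨ENNReal.one_ne_top, ENNReal.mul_ne_top ENNReal.ofNat_ne_top <|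
    ENNReal.mul_ne_top ENNReal.ofReal_ne_top (ENNReal.mul_ne_top (hinv hq₁) (hinv hq₂))⟩

theorem tsum_gagliardoEnergy_dyadicShell_offDiag_le {σ : ℝ} (hσ : 0 ≤ σ)
    (hp : p = finrank ℝ E + 2 * σ) (hF : Continuous F) (hr : 0 < r) :
    ∑' be : ℕ × ℕ, gagliardoEnergy μ p F (dyadicShell x r (-↑(be.1 + be.2 + 1)))
        (dyadicShell x r (-be.1)) ≤
      ENNReal.ofReal (3 * 2 ^ (3 * p)) * ((1 - ENNReal.ofReal (3 / 2 ^ (finrank ℝ E + 1)))⁻¹ *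
        (1 - ENNReal.ofReal (2 ^ (-(2 * σ))))⁻¹ * ∑' i : ℕ,
          gagliardoEnergy μ p F (dyadicAnnulus x r (-1 - i)) (dyadicAnnulus x r (-1 - i))) := by
  refine le_trans ?_ (mul_le_mul_right (tsum_tsum_sum_antidiagonal_geometric_le _ _ _) _)
  rw [ENNReal.tsum_prod', ← ENNReal.tsum_mul_left]
  refine ENNReal.tsum_le_tsum fun b => ?_
  rw [← ENNReal.tsum_mul_left]
  refine ENNReal.tsum_le_tsum fun e => ?_
  have h := gagliardoEnergy_dyadicShell_le_sum (μ := μ) (F := F) (x := x) hσ hp hF hr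
    (-↑(b + e + 1)) e
  rw [show -((b + e + 1 : ℕ) : ℤ) + e + 1 = -b by push_cast; ring] at h
  refine h.trans_eq (congrArg (_ * ·) (sum_congr rfl fun uw huw => ?_))
  rw [HasAntidiagonal.mem_antidiagonal] at huw
  rw [show -((b + e + 1 : ℕ) : ℤ) + uw.1 = -1 - ↑(b + uw.2) by push_cast; omega]

theorem gagliardoEnergy_ball_le {σ : ℝ} (hσ : 0 ≤ σ) (hp : p = finrank ℝ E + 2 * σ)
    (hF : Continuous F) (hr : 0 < r) :
    gagliardoEnergy μ p F (ball x r) (ball x r) ≤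
      dyadicConstant (finrank ℝ E) p σ * ∑' k : {k : ℤ // k ≤ -1},
          gagliardoEnergy μ p F (dyadicAnnulus x r k) (dyadicAnnulus x r k) := by
  set P : ℤ → ℤ → ℝ≥0∞ := fun j k =>
    gagliardoEnergy μ p F (dyadicShell x r j) (dyadicShell x r k)
  set T := ∑' i : ℕ,
    gagliardoEnergy μ p F (dyadicAnnulus x r (-1 - i)) (dyadicAnnulus x r (-1 - i))
  set c := ENNReal.ofReal (3 * 2 ^ (3 * p)) * ((1 - ENNReal.ofReal (3 / 2 ^ (finrank ℝ E + 1)))⁻¹ *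
    (1 - ENNReal.ofReal (2 ^ (-(2 * σ))))⁻¹)
  have hinj : Injective fun i : ℕ => (⟨-1 - i, by omega⟩ : {k : ℤ // k ≤ -1}) :=
    fun a b h => by simpa using congrArg Subtype.val h
  have hT : T ≤ ∑' k : {k : ℤ // k ≤ -1},
      gagliardoEnergy μ p F (dyadicAnnulus x r k) (dyadicAnnulus x r k) :=
    ENNReal.tsum_comp_le_tsum_of_injective hinj
      fun k => gagliardoEnergy μ p F (dyadicAnnulus x r k) (dyadicAnnulus x r k)
  have hfar := tsum_gagliardoEnergy_dyadicShell_offDiag_le (μ := μ) (x := x) hσ hp hF hr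
  rw [← mul_assoc] at hfar
  calc gagliardoEnergy μ p F (ball x r) (ball x r)
      = ∑' ab : ℕ × ℕ, P (-ab.1) (-ab.2) := gagliardoEnergy_ball_eq_tsum hF hr
    _ ≤ ∑' a : ℕ, P (-a) (-a) + ∑' be : ℕ × ℕ, P (-↑(be.1 + be.2 + 1)) (-be.1) +
          ∑' be : ℕ × ℕ, P (-be.1) (-↑(be.1 + be.2 + 1)) :=
        tsum_prod_le_diag_add_offDiag fun ab => P (-ab.1) (-ab.2)
    _ = ∑' a : ℕ, P (-a) (-a) + ∑' be : ℕ × ℕ, P (-↑(be.1 + be.2 + 1)) (-be.1) +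
          ∑' be : ℕ × ℕ, P (-↑(be.1 + be.2 + 1)) (-be.1) := by
        congr 1
        exact tsum_congr fun _ => gagliardoEnergy_comm hF _ _
    _ ≤ T + c * T + c * T := by
        gcongr
        exact tsum_gagliardoEnergy_dyadicShell_diag_le hr
    _ = dyadicConstant (finrank ℝ E) p σ * T := by rw [dyadicConstant]; ring
    _ ≤ _ := mul_le_mul_right hT _

end Energy

end DyadicGagliardo

/-- For non-integer `s > 0` there is `C > 0` depending only on `n, s` such that for
every Schwartz function `v`, every `x ∈ ℝ^n` and `r > 0`,
`[v]²_{B_r(x),s} ≤ C Σ_{k ≤ −1} [v]²_{A_k,s}` with `A_k = B_{2^{k+1}r}(x) ∖ B_{2^{k−1}r}(x)`. -/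
theorem stmt16 (n : ℕ) (hn : 1 ≤ n) (s : ℝ) (hs : 0 < s) (hsnotint : (⌊s⌋₊ : ℝ) ≠ s) :
    ∃ C : ℝ, 0 < C ∧
      ∀ (v : SchwartzMap (EuclideanSpace ℝ (Fin n)) ℝ)
        (x : EuclideanSpace ℝ (Fin n)) (r : ℝ), 0 < r →
        semiNormSq n s (Metric.ball x r) ⇑v ≤
          ENNReal.ofReal C *
            ∑' k : {k : ℤ // k ≤ -1},
              semiNormSq n s
                (Metric.ball x ((2 : ℝ) ^ ((k : ℤ) + 1) * r) \
                  Metric.ball x ((2 : ℝ) ^ ((k : ℤ) - 1) * r)) ⇑v := by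
  have hσ : 0 < s - ⌊s⌋₊ := sub_pos.2 ((Nat.floor_le hs.le).lt_of_ne hsnotint)
  have : Nonempty (Fin n) := ⟨⟨0, hn⟩⟩
  have hdim : finrank ℝ (EuclideanSpace ℝ (Fin n)) = n := finrank_euclideanSpace_fin
  set c := DyadicGagliardo.dyadicConstant (finrank ℝ (EuclideanSpace ℝ (Fin n)))
    (n + 2 * (s - ⌊s⌋₊)) (s - ⌊s⌋₊)
  have hc : c ≤ ENNReal.ofReal (c.toReal + 1) := by
    rw [ENNReal.ofReal_add ENNReal.toReal_nonneg zero_le_one,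
      ENNReal.ofReal_toReal (DyadicGagliardo.dyadicConstant_ne_top (hdim.symm ▸ hn) _ hσ)]
    exact le_self_add
  refine ⟨c.toReal + 1, by positivity, fun v x r hr => ?_⟩
  calc semiNormSq n s (Metric.ball x r) ⇑v ≤ c * _ :=
        DyadicGagliardo.gagliardoEnergy_ball_le hσ.le (by rw [hdim])
          ((v.smooth ⊤).continuous_iteratedFDeriv (mod_cast le_top)) hr
    _ ≤ _ := mul_le_mul_left hc _
end

section
/- Let γ > 0, α > 0, and Λ > 0. Then there exist β ∈ (0,1) and C > 0, depending only on γ, α and Λ, with the following property: if a : ℤ → ℝ satisfies a_k ≥ 0 for all k ∈ ℤ, Σ_{k∈ℤ} a_k < ∞, and for every integer N ≤ 0 the inequality Σ_{k ≤ N} a_k ≤ Λ·( Σ_{k ≥ N+1} 2^{γ(N+1−k)} a_k + 2^{αN} ) holds, then for every integer N ≤ 0 one has Σ_{k ≤ N} a_k ≤ C·(1 + Σ_{k∈ℤ} a_k)·2^{βN}. -/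
set_option maxHeartbeats 1000000 in
/-- Iteration lemma: given `γ, α, Λ > 0` there are `β ∈ (0,1)` and `C > 0` such that
every summable nonnegative sequence `(a_k)_{k∈ℤ}` satisfying, for all `N ≤ 0`,
`Σ_{k≤N} a_k ≤ Λ (Σ_{k≥N+1} 2^{γ(N+1−k)} a_k + 2^{αN})`, also satisfies
`Σ_{k≤N} a_k ≤ C (1 + Σ_k a_k) 2^{βN}` for all `N ≤ 0`. -/
theorem stmt17 (γ α Λ : ℝ) (hγ : 0 < γ) (hα : 0 < α) (hΛ : 0 < Λ) :
    ∃ β : ℝ, 0 < β ∧ β < 1 ∧ ∃ C : ℝ, 0 < C ∧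
      ∀ a : ℤ → ℝ, (∀ k, 0 ≤ a k) → Summable a →
        (∀ N : ℤ, N ≤ 0 →
          (∑' k : {k : ℤ // k ≤ N}, a k.1) ≤
            Λ * ((∑' k : {k : ℤ // N + 1 ≤ k}, (2 : ℝ) ^ (γ * ((N : ℝ) + 1 - (k.1 : ℝ))) * a k.1)
              + (2 : ℝ) ^ (α * (N : ℝ)))) →
        ∀ N : ℤ, N ≤ 0 →
          (∑' k : {k : ℤ // k ≤ N}, a k.1) ≤
            C * (1 + ∑' k : ℤ, a k) * (2 : ℝ) ^ (β * (N : ℝ)) := by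
  have h2 : (0:ℝ) < 2 := by norm_num
  set θ : ℝ := Λ / (1 + Λ) with hθdef
  have hΛ1 : (0:ℝ) < 1 + Λ := by linarith
  have hθpos : 0 < θ := div_pos hΛ hΛ1
  have hθlt : θ < 1 := (div_lt_one hΛ1).mpr (by linarith)
  set θ' : ℝ := (1 + θ) / 2 with hθ'def
  have hθ'pos : 0 < θ' := by positivity
  have hθ'lt : θ' < 1 := by rw [hθ'def]; linarith
  have hθθ' : θ < θ' := by rw [hθ'def]; linarith
  have hY1 : (1:ℝ) < (2:ℝ) ^ γ := Real.one_lt_rpow_iff_of_pos h2 |>.mpr (Or.inl ⟨one_lt_two, hγ⟩)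
  set Y : ℝ := (2:ℝ) ^ γ with hYdef
  have hYpos : 0 < Y := by linarith
  have hden : 0 < θ * (Y - 1) + θ' := by nlinarith
  set t₁ : ℝ := θ' * Y / (θ * (Y - 1) + θ') with ht₁def
  have ht₁1 : 1 < t₁ := by
    rw [ht₁def, lt_div_iff₀ hden]; nlinarith
  have ht₁pos : 0 < t₁ := by linarith
  set β : ℝ := min (min α γ) (min 1 (Real.logb 2 t₁)) / 2 with hβdef
  have hlogpos : 0 < Real.logb 2 t₁ := Real.logb_pos one_lt_two ht₁1
  have hβpos : 0 < β := by
    rw [hβdef]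
    have := lt_min (lt_min hα hγ) (lt_min one_pos hlogpos)
    linarith [this]
  have hβ1 : β < 1 := by
    rw [hβdef]
    have h1 : min (min α γ) (min 1 (Real.logb 2 t₁)) ≤ 1 :=
      le_trans (min_le_right _ _) (min_le_left _ _)
    linarith
  have hβα : β ≤ α := by
    rw [hβdef]
    have h1 : min (min α γ) (min 1 (Real.logb 2 t₁)) ≤ α :=
      le_trans (min_le_left _ _) (min_le_left _ _)
    linarith [hα]
  have hβγ : β < γ := by
    rw [hβdef]
    have h1 : min (min α γ) (min 1 (Real.logb 2 t₁)) ≤ γ :=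
      le_trans (min_le_left _ _) (min_le_right _ _)
    linarith [hγ]
  have hβlog : β ≤ Real.logb 2 t₁ := by
    rw [hβdef]
    have h1 : min (min α γ) (min 1 (Real.logb 2 t₁)) ≤ Real.logb 2 t₁ :=
      le_trans (min_le_right _ _) (min_le_right _ _)
    linarith [hlogpos]
  set X : ℝ := (2:ℝ) ^ β with hXdef
  have hXpos : 0 < X := Real.rpow_pos_of_pos h2 β
  have hX1 : 1 < X := Real.one_lt_rpow_iff_of_pos h2 |>.mpr (Or.inl ⟨one_lt_two, hβpos⟩)
  have hXt₁ : X ≤ t₁ := by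
    calc X ≤ (2:ℝ) ^ Real.logb 2 t₁ := Real.rpow_le_rpow_of_exponent_le one_le_two hβlog
    _ = t₁ := Real.rpow_logb h2 (by norm_num) ht₁pos
  have hXY : X < Y := Real.rpow_lt_rpow_of_exponent_lt one_lt_two hβγ
  -- the negative powers
  have hnegβ : (2:ℝ) ^ (-β) = X⁻¹ := by rw [Real.rpow_neg (le_of_lt h2), hXdef]
  have hnegγ : (2:ℝ) ^ (-γ) = Y⁻¹ := by rw [Real.rpow_neg (le_of_lt h2), hYdef]
  set f : ℝ := X * (Y - 1) / (Y - X) with hfdef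
  have hfpos : 0 < f := by
    apply div_pos <;> nlinarith
  -- key identity : f * 2^{-β} = (1 - 2^{-γ}) + f * 2^{-γ}
  have hX0 : X ≠ 0 := ne_of_gt hXpos
  have hY0 : Y ≠ 0 := ne_of_gt hYpos
  have hYX0 : Y - X ≠ 0 := ne_of_gt (by linarith)
  have hfid : f * X⁻¹ = (1 - Y⁻¹) + f * Y⁻¹ := by
    rw [hfdef]; field_simp; ring
  have hcontr : θ * f ≤ θ' := by
    have hXd : X * (θ * (Y - 1) + θ') ≤ θ' * Y := by
      rw [ht₁def, le_div_iff₀ hden] at hXt₁; linarith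
    rw [hfdef, mul_div_assoc']
    rw [div_le_iff₀ (by linarith : (0:ℝ) < Y - X)]
    linarith [hXd]
  set C : ℝ := 2 / (1 - θ') with hCdef
  have hC1 : 0 < 1 - θ' := by linarith
  have hCpos : 0 < C := by positivity
  have hCid : (1 - θ') * C = 2 := by rw [hCdef]; field_simp
  have hC2 : 2 < C := by rw [hCdef, lt_div_iff₀ hC1]; linarith
  clear_value θ θ' Y t₁ β X f C
  clear hθ'def hYdef ht₁def hβdef hXdef hfdef hCdef hβlog hlogpos hXt₁ ht₁1 ht₁pos hden
  refine ⟨β, hβpos, hβ1, C, hCpos, ?_⟩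
  intro a ha hsum hyp
  set T : ℝ := ∑' k : ℤ, a k with hTdef
  have hT0 : 0 ≤ T := tsum_nonneg ha
  set S : ℤ → ℝ := fun M => ∑' k : {k : ℤ // k ≤ M}, a k.1 with hSdef
  set W : ℤ → ℤ → ℝ := fun M k => (2:ℝ) ^ (γ * ((M:ℝ) - (k:ℝ))) * a k with hWdef
  set G : ℤ → ℝ := fun M => ∑' k : ℤ, (Set.Ici M).indicator (W M) k with hGdef
  have hWnn : ∀ M k, 0 ≤ W M k := fun M k =>
    mul_nonneg (Real.rpow_nonneg (by norm_num) _) (ha k)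
  have hindnn : ∀ M k, 0 ≤ (Set.Ici M).indicator (W M) k := fun M k =>
    Set.indicator_nonneg (fun j _ => hWnn M j) k
  have hindle : ∀ M k, (Set.Ici M).indicator (W M) k ≤ a k := by
    intro M k
    by_cases hk : k ∈ Set.Ici M
    · rw [Set.indicator_of_mem hk]
      have hexp : γ * ((M:ℝ) - (k:ℝ)) ≤ 0 := by
        apply mul_nonpos_of_nonneg_of_nonpos (le_of_lt hγ)
        have : (M:ℝ) ≤ (k:ℝ) := by exact_mod_cast hk
        linarith
      calc W M k ≤ 1 * a k := by
            apply mul_le_mul_of_nonneg_right _ (ha k)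
            exact Real.rpow_le_one_of_one_le_of_nonpos one_le_two hexp
        _ = a k := one_mul _
    · rw [Set.indicator_of_notMem hk]; exact ha k
  have hGsm : ∀ M, Summable ((Set.Ici M).indicator (W M)) := fun M =>
    Summable.of_nonneg_of_le (hindnn M) (hindle M) hsum
  have hGnn : ∀ M, 0 ≤ G M := fun M => tsum_nonneg (hindnn M)
  have hGleT : ∀ M, G M ≤ T := fun M => Summable.tsum_le_tsum (hindle M) (hGsm M) hsum
  have hSind : ∀ M, S M = ∑' k : ℤ, (Set.Iic M).indicator a k := fun M =>
    tsum_subtype (Set.Iic M) a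
  have hSnn : ∀ M, 0 ≤ S M := fun M => tsum_nonneg (fun k => ha k.1)
  have hSleT : ∀ M, S M ≤ T := by
    intro M; rw [hSind M]
    exact Summable.tsum_le_tsum (fun k => Set.indicator_le_self' (fun x _ => ha x) k)
      (hsum.indicator _) hsum
  clear_value T
  have hSrec : ∀ M : ℤ, S M = S (M - 1) + a M := by
    intro M
    rw [hSind M, hSind (M - 1)]
    have hsplit : ∀ k, (Set.Iic M).indicator a k
        = (Set.Iic (M - 1)).indicator a k + ({M} : Set ℤ).indicator a k := by
      intro k
      simp only [Set.indicator_apply, Set.mem_Iic, Set.mem_singleton_iff]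
      by_cases h2' : k = M
      · subst h2'; rw [if_pos le_rfl, if_neg (by omega), if_pos rfl]; ring
      · by_cases h1 : k ≤ M
        · rw [if_pos h1, if_pos (by omega), if_neg h2']; ring
        · rw [if_neg h1, if_neg (by omega), if_neg h2']; ring
    rw [tsum_congr hsplit, Summable.tsum_add (hsum.indicator _)
      (summable_of_ne_finset_zero (s := ({M} : Finset ℤ))
        (fun k hk => Set.indicator_of_notMem (by simpa using hk) a))]
    congr 1
    rw [tsum_eq_single M (fun k hk => Set.indicator_of_notMem (by simpa using hk) a)]
    exact Set.indicator_of_mem rfl a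
  have hGrec : ∀ M : ℤ, G M = a M + (2:ℝ) ^ (-γ) * G (M + 1) := by
    intro M
    have hWM : W M M = a M := by
      show (2:ℝ) ^ (γ * ((M:ℝ) - (M:ℝ))) * a M = a M
      rw [sub_self, mul_zero, Real.rpow_zero, one_mul]
    have hsplit : ∀ k, (Set.Ici M).indicator (W M) k
        = ({M} : Set ℤ).indicator (W M) k
          + (2:ℝ) ^ (-γ) * (Set.Ici (M + 1)).indicator (W (M + 1)) k := by
      intro k
      simp only [Set.indicator_apply, Set.mem_Ici, Set.mem_singleton_iff]
      by_cases h2' : k = M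
      · subst h2'; rw [if_pos le_rfl, if_pos rfl, if_neg (by omega)]; ring
      · by_cases h1 : M ≤ k
        · rw [if_pos h1, if_neg h2', if_pos (by omega)]
          show W M k = 0 + (2:ℝ) ^ (-γ) * W (M + 1) k
          show (2:ℝ) ^ (γ * ((M:ℝ) - (k:ℝ))) * a k
            = 0 + (2:ℝ) ^ (-γ) * ((2:ℝ) ^ (γ * (((M + 1 : ℤ):ℝ) - (k:ℝ))) * a k)
          rw [zero_add, ← mul_assoc, ← Real.rpow_add h2]
          congr 2
          push_cast; ring
        · rw [if_neg h1, if_neg h2', if_neg (by omega)]; ring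
    have hsm1 : Summable (({M} : Set ℤ).indicator (W M)) :=
      summable_of_ne_finset_zero (s := ({M} : Finset ℤ))
        (fun k hk => Set.indicator_of_notMem (by simpa using hk) (W M))
    have hsm2 : Summable (fun k => (2:ℝ) ^ (-γ) * (Set.Ici (M + 1)).indicator (W (M + 1)) k) :=
      (hGsm (M + 1)).mul_left _
    calc G M = ∑' k : ℤ, (({M} : Set ℤ).indicator (W M) k
          + (2:ℝ) ^ (-γ) * (Set.Ici (M + 1)).indicator (W (M + 1)) k) := tsum_congr hsplit
      _ = (∑' k : ℤ, ({M} : Set ℤ).indicator (W M) k)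
          + ∑' k : ℤ, (2:ℝ) ^ (-γ) * (Set.Ici (M + 1)).indicator (W (M + 1)) k :=
            Summable.tsum_add hsm1 hsm2
      _ = a M + (2:ℝ) ^ (-γ) * G (M + 1) := by
            rw [tsum_mul_left,
              tsum_eq_single M (fun k hk => Set.indicator_of_notMem (by simpa using hk) (W M)),
              Set.indicator_of_mem (Set.mem_singleton M) (W M), hWM]
  have hhyp' : ∀ N : ℤ, N ≤ 0 → S N ≤ Λ * (G (N + 1) + (2:ℝ) ^ (α * (N:ℝ))) := by
    intro N hN
    have h0 := hyp N hN
    have e0 : (∑' k : {k : ℤ // N + 1 ≤ k}, (2:ℝ) ^ (γ * ((N:ℝ) + 1 - (k.1:ℝ))) * a k.1)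
        = ∑' k : {k : ℤ // N + 1 ≤ k}, W (N + 1) k.1 := by
      apply tsum_congr; intro k
      have hc : γ * ((N:ℝ) + 1 - (k.1:ℝ)) = γ * ((((N + 1):ℤ):ℝ) - (k.1:ℝ)) := by
        push_cast; ring
      rw [hc]
    have e1 : (∑' k : {k : ℤ // N + 1 ≤ k}, W (N + 1) k.1) = G (N + 1) :=
      tsum_subtype (Set.Ici (N + 1)) (W (N + 1))
    rw [e0, e1] at h0
    exact h0
  have hC2' : (2:ℝ) < C := hC2
  have hSapp : ∀ M : ℤ, S M = ∑' k : {k : ℤ // k ≤ M}, a k.1 := fun _ => rfl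
  clear_value S W G
  clear hTdef hSdef hWdef hGdef hSind hyp hXY hX1 hX0 hY0 hYX0 hC1 hC2
  set B : ℝ := C * (1 + T) with hBdef
  have hBpos : 0 < B := by rw [hBdef]; positivity
  have hTB : T ≤ B := by
    have p1 : (0:ℝ) ≤ (C - 2) * (1 + T) := mul_nonneg (by linarith) (by linarith)
    rw [hBdef]; linarith
  have hCB : θ' * B + 2 * (1 + T) = B := by
    rw [hBdef]; linear_combination (-(1 + T)) * hCid
  clear_value B
  have key : ∀ n : ℕ, S (-(n:ℤ)) ≤ B * (2:ℝ) ^ (-(β * (n:ℝ))) ∧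
      S (-(n:ℤ)) + G (-(n:ℤ) + 1)
        ≤ f * B * (2:ℝ) ^ (-(β * (n:ℝ))) + 2 * T * (2:ℝ) ^ (-(γ * (n:ℝ))) := by
    intro n
    induction n with
    | zero =>
      constructor
      · simp only [Nat.cast_zero, neg_zero, mul_zero, Real.rpow_zero, mul_one]
        exact (hSleT 0).trans hTB
      · simp only [Nat.cast_zero, neg_zero, mul_zero, Real.rpow_zero, mul_one, zero_add]
        have q1 := hSleT 0
        have q2 := hGleT 1
        have q3 : (0:ℝ) ≤ f * B := le_of_lt (mul_pos hfpos hBpos)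
        linarith
    | succ n ih =>
      obtain ⟨ih1, ih2⟩ := ih
      have hn0 : (0:ℝ) ≤ (n:ℝ) := Nat.cast_nonneg n
      have hidx : (-(((n+1):ℕ):ℤ)) = -(n:ℤ) - 1 := by push_cast; ring
      have hidx2 : (-(((n+1):ℕ):ℤ)) + 1 = -(n:ℤ) := by push_cast; ring
      have hcast : (((n+1):ℕ):ℝ) = (n:ℝ) + 1 := by push_cast; ring
      have hx : (2:ℝ) ^ (-(β * ((n:ℝ) + 1))) = X⁻¹ * (2:ℝ) ^ (-(β * (n:ℝ))) := by
        rw [← hnegβ, ← Real.rpow_add h2]; congr 1; ring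
      have hy : (2:ℝ) ^ (-(γ * ((n:ℝ) + 1))) = Y⁻¹ * (2:ℝ) ^ (-(γ * (n:ℝ))) := by
        rw [← hnegγ, ← Real.rpow_add h2]; congr 1; ring
      have e1 : S (-(((n+1):ℕ):ℤ)) + G ((-(((n+1):ℕ):ℤ)) + 1)
          = (1 - Y⁻¹) * S (-(n:ℤ)) + Y⁻¹ * (S (-(n:ℤ)) + G (-(n:ℤ) + 1)) := by
        rw [hidx2, hidx]
        have r1 := hSrec (-(n:ℤ))
        have r2 := hGrec (-(n:ℤ))
        rw [hnegγ] at r2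
        rw [r2]
        linarith [r1]
      have h2'' : S (-(((n+1):ℕ):ℤ)) + G ((-(((n+1):ℕ):ℤ)) + 1)
          ≤ f * B * (2:ℝ) ^ (-(β * (((n+1):ℕ):ℝ)))
            + 2 * T * (2:ℝ) ^ (-(γ * (((n+1):ℕ):ℝ))) := by
        rw [e1, hcast, hx, hy]
        have hY1' : (0:ℝ) ≤ 1 - Y⁻¹ := by
          have : Y⁻¹ ≤ 1 := by
            rw [inv_le_one_iff₀]; right; linarith
          linarith
        have b1 : (1 - Y⁻¹) * S (-(n:ℤ)) ≤ (1 - Y⁻¹) * (B * (2:ℝ) ^ (-(β * (n:ℝ)))) :=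
          mul_le_mul_of_nonneg_left ih1 hY1'
        have b2 : Y⁻¹ * (S (-(n:ℤ)) + G (-(n:ℤ) + 1))
            ≤ Y⁻¹ * (f * B * (2:ℝ) ^ (-(β * (n:ℝ))) + 2 * T * (2:ℝ) ^ (-(γ * (n:ℝ)))) :=
          mul_le_mul_of_nonneg_left ih2 (by positivity)
        have e2 : f * B * (X⁻¹ * (2:ℝ) ^ (-(β * (n:ℝ)))) + 2 * T * (Y⁻¹ * (2:ℝ) ^ (-(γ * (n:ℝ))))
            = (1 - Y⁻¹) * (B * (2:ℝ) ^ (-(β * (n:ℝ))))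
              + Y⁻¹ * (f * B * (2:ℝ) ^ (-(β * (n:ℝ))) + 2 * T * (2:ℝ) ^ (-(γ * (n:ℝ)))) := by
          linear_combination (B * (2:ℝ) ^ (-(β * (n:ℝ)))) * hfid
        rw [e2]
        linarith [b1, b2]
      have hprev := hhyp' (-(((n+1):ℕ):ℤ)) (by omega)
      rw [hidx2] at hprev
      have hcastN : ((-(((n+1):ℕ):ℤ) : ℤ) : ℝ) = -((n:ℝ) + 1) := by push_cast; ring
      rw [hcastN] at hprev
      have hxpos : (0:ℝ) < (2:ℝ) ^ (-(β * ((n:ℝ) + 1))) := Real.rpow_pos_of_pos h2 _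
      have hαle : (2:ℝ) ^ (α * (-((n:ℝ) + 1))) ≤ (2:ℝ) ^ (-(β * ((n:ℝ) + 1))) := by
        apply Real.rpow_le_rpow_of_exponent_le one_le_two
        have p1 : (0:ℝ) ≤ (α - β) * ((n:ℝ) + 1) :=
          mul_nonneg (sub_nonneg.mpr hβα) (by positivity)
        linarith
      have hγle : (2:ℝ) ^ (-(γ * ((n:ℝ) + 1))) ≤ (2:ℝ) ^ (-(β * ((n:ℝ) + 1))) := by
        apply Real.rpow_le_rpow_of_exponent_le one_le_two
        have p1 : (0:ℝ) ≤ (γ - β) * ((n:ℝ) + 1) :=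
          mul_nonneg (sub_nonneg.mpr hβγ.le) (by positivity)
        linarith
      have h2c := h2''
      rw [hidx2] at h2c
      rw [hcast] at h2c
      have hS1 : (1 + Λ) * S (-(((n+1):ℕ):ℤ))
          ≤ Λ * ((f * B + 2 * T + 1) * (2:ℝ) ^ (-(β * ((n:ℝ) + 1)))) := by
        have s2 : 2 * T * (2:ℝ) ^ (-(γ * ((n:ℝ) + 1))) ≤ 2 * T * (2:ℝ) ^ (-(β * ((n:ℝ) + 1))) :=
          mul_le_mul_of_nonneg_left hγle (by linarith)
        have hSx : S (-(((n+1):ℕ):ℤ)) + G (-(n:ℤ))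
            ≤ (f * B + 2 * T) * (2:ℝ) ^ (-(β * ((n:ℝ) + 1))) := by
          have e3 : (f * B + 2 * T) * (2:ℝ) ^ (-(β * ((n:ℝ) + 1)))
              = f * B * (2:ℝ) ^ (-(β * ((n:ℝ) + 1)))
                + 2 * T * (2:ℝ) ^ (-(β * ((n:ℝ) + 1))) := by ring
          linarith [h2c, s2]
        have w1 := mul_le_mul_of_nonneg_left hSx (le_of_lt hΛ)
        have w2 := mul_le_mul_of_nonneg_left hαle (le_of_lt hΛ)
        have e4 : Λ * ((f * B + 2 * T) * (2:ℝ) ^ (-(β * ((n:ℝ) + 1))))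
            + Λ * ((2:ℝ) ^ (-(β * ((n:ℝ) + 1))))
            = Λ * ((f * B + 2 * T + 1) * (2:ℝ) ^ (-(β * ((n:ℝ) + 1)))) := by ring
        linarith [w1, w2, hprev]
      have hθform : S (-(((n+1):ℕ):ℤ))
          ≤ θ * ((f * B + 2 * T + 1) * (2:ℝ) ^ (-(β * ((n:ℝ) + 1)))) := by
        rw [hθdef, div_mul_eq_mul_div, le_div_iff₀ hΛ1]
        linarith [hS1]
      have hcoef : θ * (f * B + 2 * T + 1) ≤ B := by
        have c1 : θ * f * B ≤ θ' * B := mul_le_mul_of_nonneg_right hcontr hBpos.le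
        have c2 : θ * (2 * T + 1) ≤ 2 * T + 1 := by
          have p1 : (0:ℝ) ≤ (1 - θ) * (2 * T + 1) := mul_nonneg (by linarith) (by linarith)
          linarith
        linarith [c1, c2, hCB]
      have h1' : S (-(((n+1):ℕ):ℤ)) ≤ B * (2:ℝ) ^ (-(β * (((n+1):ℕ):ℝ))) := by
        rw [hcast]
        calc S (-(((n+1):ℕ):ℤ)) ≤ θ * ((f * B + 2 * T + 1) * (2:ℝ) ^ (-(β * ((n:ℝ) + 1)))) :=
              hθform
          _ = (θ * (f * B + 2 * T + 1)) * (2:ℝ) ^ (-(β * ((n:ℝ) + 1))) := by ring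
          _ ≤ B * (2:ℝ) ^ (-(β * ((n:ℝ) + 1))) :=
              mul_le_mul_of_nonneg_right hcoef hxpos.le
      exact ⟨h1', h2''⟩
  intro N hN
  have hn : (((-N).toNat : ℕ) : ℤ) = -N := Int.toNat_of_nonneg (by omega)
  have h := (key (-N).toNat).1
  have hidx : (-(((-N).toNat : ℕ) : ℤ)) = N := by rw [hn]; ring
  rw [hidx] at h
  have hncast : (((-N).toNat : ℕ) : ℝ) = -(N:ℝ) := by exact_mod_cast congrArg (Int.cast : ℤ → ℝ) hn
  have hexp : -(β * (((-N).toNat : ℕ) : ℝ)) = β * (N:ℝ) := by rw [hncast]; ring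
  rw [hexp] at h
  rw [← hSapp N]
  exact h
end

section
/- For all Λ₁ > 0, Λ₂ > 0, γ > 0, and every positive integer L, there exist a constant Λ₃ > 0 and an integer N̄ ≤ 0 with the following property: whenever a : ℤ → ℝ satisfies a_k ≥ 0 for all k ∈ ℤ, Σ_{k∈ℤ} a_k < ∞, and for every integer N ≤ 0 the inequality Σ_{k ≤ N} a_k ≤ (1/2)·Σ_{k ≤ N+L} a_k + Λ₁·Σ_{k ≤ N} 2^{γ(k−N)} a_k + Λ₂·Σ_{k ≥ N+1} 2^{γ(N−k)} a_k + Λ₂·2^{γN} holds, then for every integer N ≤ N̄ one has Σ_{k ≤ N} a_k ≤ Λ₃·( Σ_{k ≥ N+1} 2^{γ(N−k)} a_k + 2^{γN} ). -/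
/-!
Write `S(N) = ∑_{k ≤ N} a_k` and `T(N) = ∑_{k > N} 2^{γ(N-k)} a_k`. Apply the hypothesis at
`M = N + m`, with `m` so large that `Λ₁ 2^{-γm} ≤ 1/8`. Passing from `M` back to `N` only costs
the factors `2^{γm}` and `2^{γ(m+L)}`: the mass of `a` on `(N, M + L]` is at most `2^{γ(m+L)} T(N)`,
the head weights `2^{γ(k-M)}` are at most `2^{-γm}` for `k ≤ N`, and `T(M) ≤ 2^{γm} T(N)`.
This gives `S(N) ≤ S(M) ≤ (1/2 + 1/8) S(N) + K (T(N) + 2^{γN})`, and since `S(N)` is finite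
it can be absorbed into the left-hand side.
-/

open Set

section Comparison

variable {ι : Type*} {s t u : Set ι} {f g h : ι → ℝ}

theorem tsum_subtype_le_mul_of_indicator_le {c : ℝ} (hf : Summable (s.indicator f))
    (hg : Summable (t.indicator g)) (hle : ∀ i, s.indicator f i ≤ c * t.indicator g i) :
    ∑' i : s, f i ≤ c * ∑' i : t, g i := by
  rw [tsum_subtype, tsum_subtype, ← tsum_mul_left]
  exact hf.tsum_le_tsum hle (hg.mul_left c)

theorem tsum_subtype_le_mul_add_mul_of_indicator_le {c d : ℝ} (hf : Summable (s.indicator f))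
    (hg : Summable (t.indicator g)) (hh : Summable (u.indicator h))
    (hle : ∀ i, s.indicator f i ≤ c * t.indicator g i + d * u.indicator h i) :
    ∑' i : s, f i ≤ c * ∑' i : t, g i + d * ∑' i : u, h i := by
  rw [tsum_subtype, tsum_subtype, tsum_subtype, ← tsum_mul_left, ← tsum_mul_left,
    ← (hg.mul_left c).tsum_add (hh.mul_left d)]
  exact hf.tsum_le_tsum hle ((hg.mul_left c).add (hh.mul_left d))

theorem summable_indicator_mul_of_le_one {a w : ι → ℝ} (ha : ∀ i, 0 ≤ a i) (hsum : Summable a)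
    (hw₀ : ∀ i ∈ s, 0 ≤ w i) (hw₁ : ∀ i ∈ s, w i ≤ 1) :
    Summable (s.indicator fun i ↦ w i * a i) :=
  hsum.of_nonneg_of_le (indicator_nonneg fun i hi ↦ mul_nonneg (hw₀ i hi) (ha i))
    (indicator_le' (fun i hi ↦ mul_le_of_le_one_left (ha i) (hw₁ i hi)) fun i _ ↦ ha i)

end Comparison

theorem two_rpow_mul_le_two_rpow_mul {γ x y : ℝ} (hγ : 0 ≤ γ) (hxy : x ≤ y) :
    (2 : ℝ) ^ (γ * x) ≤ (2 : ℝ) ^ (γ * y) :=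
  Real.rpow_le_rpow_of_exponent_le one_le_two (mul_le_mul_of_nonneg_left hxy hγ)

theorem exists_nat_le_two_rpow_mul {γ : ℝ} (hγ : 0 < γ) (C : ℝ) :
    ∃ m : ℕ, C ≤ (2 : ℝ) ^ (γ * m) := by
  obtain ⟨m, hm⟩ := pow_unbounded_of_one_lt C (Real.one_lt_rpow one_lt_two hγ)
  refine ⟨m, hm.le.trans_eq ?_⟩
  rw [Real.rpow_mul zero_le_two, Real.rpow_natCast]

noncomputable def headSum (a : ℤ → ℝ) (N : ℤ) : ℝ := ∑' k : Iic N, a k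

noncomputable def headWeightedSum (γ : ℝ) (a : ℤ → ℝ) (N : ℤ) : ℝ :=
  ∑' k : Iic N, (2 : ℝ) ^ (γ * ((k : ℝ) - N)) * a k

noncomputable def tailWeightedSum (γ : ℝ) (a : ℤ → ℝ) (N : ℤ) : ℝ :=
  ∑' k : Ioi N, (2 : ℝ) ^ (γ * ((N : ℝ) - k)) * a k

section WeightedSums

variable {γ : ℝ} {a : ℤ → ℝ}

theorem summable_indicator_headWeight (hγ : 0 ≤ γ) (ha : ∀ k, 0 ≤ a k)
    (hsum : Summable a) (N : ℤ) :
    Summable ((Iic N).indicator fun k : ℤ ↦ (2 : ℝ) ^ (γ * ((k : ℝ) - N)) * a k) :=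
  summable_indicator_mul_of_le_one ha hsum (fun _ _ ↦ by positivity) fun k hk ↦
    Real.rpow_le_one_of_one_le_of_nonpos one_le_two
      (mul_nonpos_of_nonneg_of_nonpos hγ (by simpa using (Int.cast_le (R := ℝ)).2 hk))

theorem summable_indicator_tailWeight (hγ : 0 ≤ γ) (ha : ∀ k, 0 ≤ a k)
    (hsum : Summable a) (N : ℤ) :
    Summable ((Ioi N).indicator fun k : ℤ ↦ (2 : ℝ) ^ (γ * ((N : ℝ) - k)) * a k) :=
  summable_indicator_mul_of_le_one ha hsum (fun _ _ ↦ by positivity) fun k hk ↦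
    Real.rpow_le_one_of_one_le_of_nonpos one_le_two
      (mul_nonpos_of_nonneg_of_nonpos hγ (by simpa using (Int.cast_lt (R := ℝ)).2 hk |>.le))

theorem headSum_mono (ha : ∀ k, 0 ≤ a k) (hsum : Summable a) {N M : ℤ}
    (hNM : N ≤ M) : headSum a N ≤ headSum a M := by
  unfold headSum
  simpa only [one_mul] using tsum_subtype_le_mul_of_indicator_le (c := 1) (hsum.indicator _)
    (hsum.indicator _) fun k ↦ by
      simp only [indicator_apply, mem_Iic, one_mul]
      split_ifs <;> first | rfl | omega | exact ha k

theorem headSum_add_le (hγ : 0 ≤ γ) (ha : ∀ k, 0 ≤ a k)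
    (hsum : Summable a) (N : ℤ) (n : ℕ) :
    headSum a (N + n) ≤ headSum a N + (2 : ℝ) ^ (γ * n) * tailWeightedSum γ a N := by
  unfold headSum tailWeightedSum
  simpa only [one_mul] using tsum_subtype_le_mul_add_mul_of_indicator_le (c := 1)
    (d := (2 : ℝ) ^ (γ * n)) (hsum.indicator _) (hsum.indicator _)
    (summable_indicator_tailWeight hγ ha hsum N) fun k ↦ by
      simp only [indicator_apply, mem_Iic, mem_Ioi]
      split_ifs with h₁ h₂ h₃ h₃ h₂ h₃ h₃ <;> try omega
      · simp
      · have hk : (k : ℝ) ≤ N + n := by exact_mod_cast h₁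
        calc a k ≤ (2 : ℝ) ^ (γ * (n + (N - k))) * a k :=
              le_mul_of_one_le_left (ha k) (Real.one_le_rpow one_le_two (by nlinarith))
          _ = 1 * 0 + (2 : ℝ) ^ (γ * n) * ((2 : ℝ) ^ (γ * (N - k)) * a k) := by
              rw [mul_add, Real.rpow_add two_pos]; ring
      · simp only [mul_zero, zero_add]; have := ha k; positivity

theorem tailWeightedSum_add_le (hγ : 0 ≤ γ) (ha : ∀ k, 0 ≤ a k)
    (hsum : Summable a) (N : ℤ) (n : ℕ) :
    tailWeightedSum γ a (N + n) ≤ (2 : ℝ) ^ (γ * n) * tailWeightedSum γ a N := by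
  unfold tailWeightedSum
  exact tsum_subtype_le_mul_of_indicator_le (summable_indicator_tailWeight hγ ha hsum _)
    (summable_indicator_tailWeight hγ ha hsum N) fun k ↦ by
      simp only [indicator_apply, mem_Ioi]
      split_ifs with h₁ h₂ <;> try omega
      · rw [← mul_assoc, ← Real.rpow_add two_pos]; push_cast; ring_nf; rfl
      · have := ha k; positivity
      · simp

theorem headWeightedSum_add_le (hγ : 0 ≤ γ) (ha : ∀ k, 0 ≤ a k)
    (hsum : Summable a) (N : ℤ) (n : ℕ) :
    headWeightedSum γ a (N + n) ≤
      (2 : ℝ) ^ (-(γ * n)) * headSum a N + (2 : ℝ) ^ (γ * n) * tailWeightedSum γ a N := by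
  unfold headWeightedSum headSum tailWeightedSum
  exact tsum_subtype_le_mul_add_mul_of_indicator_le (summable_indicator_headWeight hγ ha hsum _)
    (hsum.indicator _) (summable_indicator_tailWeight hγ ha hsum N) fun k ↦ by
      simp only [indicator_apply, mem_Iic, mem_Ioi]
      split_ifs with h₁ h₂ h₃ h₃ h₂ h₃ h₃ <;> try omega
      · have hk : (k : ℝ) ≤ N := by exact_mod_cast h₂
        have hw : (2 : ℝ) ^ (γ * ((k : ℝ) - (N + n : ℤ))) ≤ (2 : ℝ) ^ (γ * ((N : ℝ) - (N + n))) :=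
          two_rpow_mul_le_two_rpow_mul hγ (by push_cast; linarith)
        rw [show γ * ((N : ℝ) - (N + n)) = -(γ * n) by ring] at hw
        simpa only [mul_zero, add_zero] using mul_le_mul_of_nonneg_right hw (ha k)
      · have hk : (k : ℝ) ≤ N + n := by exact_mod_cast h₁
        have hk' : (N : ℝ) < k := by exact_mod_cast h₃
        simp only [mul_zero, zero_add]
        push_cast
        calc (2 : ℝ) ^ (γ * (k - (N + n))) * a k ≤ (2 : ℝ) ^ (γ * (n + (N - k))) * a k :=
              mul_le_mul_of_nonneg_right (two_rpow_mul_le_two_rpow_mul hγ (by linarith)) (ha k)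
          _ = (2 : ℝ) ^ (γ * n) * ((2 : ℝ) ^ (γ * (N - k)) * a k) := by
              rw [mul_add, Real.rpow_add two_pos]; ring
      · simp only [mul_zero, zero_add]; have := ha k; positivity

theorem headSum_le_mul_tailWeightedSum_add_of_shift {Λ₁ Λ₂ : ℝ} {L m : ℕ} (hΛ₁ : 0 ≤ Λ₁)
    (hΛ₂ : 0 ≤ Λ₂) (hγ : 0 ≤ γ) (ha : ∀ k, 0 ≤ a k) (hsum : Summable a)
    (hm : 8 * Λ₁ ≤ (2 : ℝ) ^ (γ * m)) (N : ℤ)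
    (hN : headSum a (N + m) ≤ 1 / 2 * headSum a (N + m + L) + Λ₁ * headWeightedSum γ a (N + m)
      + Λ₂ * tailWeightedSum γ a (N + m) + Λ₂ * (2 : ℝ) ^ (γ * ((N + m : ℤ) : ℝ))) :
    headSum a N ≤ 8 / 3 * ((2 : ℝ) ^ (γ * (m + L)) / 2 + (Λ₁ + Λ₂) * (2 : ℝ) ^ (γ * m))
      * (tailWeightedSum γ a N + (2 : ℝ) ^ (γ * N)) := by
  have hS := headSum_add_le hγ ha hsum N (m + L)
  rw [show N + ((m + L : ℕ) : ℤ) = N + m + L by push_cast; ring] at hS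
  push_cast at hS
  have hpow : (2 : ℝ) ^ (γ * ((N + m : ℤ) : ℝ)) = (2 : ℝ) ^ (γ * m) * (2 : ℝ) ^ (γ * N) := by
    rw [← Real.rpow_add two_pos]; push_cast; ring_nf
  have hsmall : Λ₁ * (2 : ℝ) ^ (-(γ * m)) ≤ 1 / 8 := by
    rw [Real.rpow_neg zero_le_two, ← div_eq_mul_inv, div_le_iff₀ (by positivity)]
    linarith
  set S := headSum a N
  set T := tailWeightedSum γ a N
  set c := (2 : ℝ) ^ (γ * m)
  set p := (2 : ℝ) ^ (γ * N)
  have hS0 : 0 ≤ S := tsum_nonneg fun k ↦ ha k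
  have habsorb : S ≤ 5 / 8 * S + ((2 : ℝ) ^ (γ * (m + L)) / 2 + (Λ₁ + Λ₂) * c) * (T + p) :=
    calc S ≤ headSum a (N + m) := headSum_mono ha hsum (by omega)
      _ ≤ 1 / 2 * (S + (2 : ℝ) ^ (γ * (m + L)) * T)
          + Λ₁ * ((2 : ℝ) ^ (-(γ * m)) * S + c * T) + Λ₂ * (c * T) + Λ₂ * (c * p) := by
        rw [← hpow]
        grw [← hS, ← headWeightedSum_add_le hγ ha hsum N m, ← tailWeightedSum_add_le hγ ha hsum N m]
        exact hN
      _ ≤ 5 / 8 * S + ((2 : ℝ) ^ (γ * (m + L)) / 2 + (Λ₁ + Λ₂) * c) * (T + p) := by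
        have : 0 ≤ ((2 : ℝ) ^ (γ * (m + L)) / 2 + Λ₁ * c) * p := by positivity
        linarith [mul_le_mul_of_nonneg_right hsmall hS0]
  linarith

end WeightedSums

theorem stmt18_general (Λ₁ Λ₂ γ : ℝ) (hΛ₁ : 0 < Λ₁) (hΛ₂ : 0 < Λ₂) (hγ : 0 < γ)
    (L : ℕ) :
    ∃ Λ₃ : ℝ, 0 < Λ₃ ∧ ∃ Nbar : ℤ, Nbar ≤ 0 ∧
      ∀ a : ℤ → ℝ, (∀ k, 0 ≤ a k) → Summable a →
        (∀ N : ℤ, N ≤ 0 →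
          (∑' k : {k : ℤ // k ≤ N}, a k.1) ≤
            (1 / 2) * (∑' k : {k : ℤ // k ≤ N + (L : ℤ)}, a k.1)
              + Λ₁ * (∑' k : {k : ℤ // k ≤ N}, (2 : ℝ) ^ (γ * ((k.1 : ℝ) - (N : ℝ))) * a k.1)
              + Λ₂ * (∑' k : {k : ℤ // N + 1 ≤ k}, (2 : ℝ) ^ (γ * ((N : ℝ) - (k.1 : ℝ))) * a k.1)
              + Λ₂ * (2 : ℝ) ^ (γ * (N : ℝ))) →
        ∀ N : ℤ, N ≤ Nbar →
          (∑' k : {k : ℤ // k ≤ N}, a k.1) ≤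
            Λ₃ * ((∑' k : {k : ℤ // N + 1 ≤ k}, (2 : ℝ) ^ (γ * ((N : ℝ) - (k.1 : ℝ))) * a k.1)
              + (2 : ℝ) ^ (γ * (N : ℝ))) := by
  obtain ⟨m, hm⟩ := exists_nat_le_two_rpow_mul hγ (8 * Λ₁)
  refine ⟨8 / 3 * ((2 : ℝ) ^ (γ * (m + L)) / 2 + (Λ₁ + Λ₂) * (2 : ℝ) ^ (γ * m)), by positivity,
    -m, by omega, fun a ha hsum hyp N hN ↦ ?_⟩
  exact headSum_le_mul_tailWeightedSum_add_of_shift hΛ₁.le hΛ₂.le hγ.le ha hsum hm N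
    (hyp (N + m) (by omega))

/-- Iteration lemma: for all `Λ₁, Λ₂, γ > 0` and every positive integer `L` there are
`Λ₃ > 0` and an integer `N̄ ≤ 0` such that every summable nonnegative sequence
`(a_k)_{k∈ℤ}` satisfying, for all `N ≤ 0`,
`Σ_{k≤N} a_k ≤ (1/2) Σ_{k≤N+L} a_k + Λ₁ Σ_{k≤N} 2^{γ(k−N)} a_k
  + Λ₂ Σ_{k≥N+1} 2^{γ(N−k)} a_k + Λ₂ 2^{γN}`,
also satisfies, for all `N ≤ N̄`,
`Σ_{k≤N} a_k ≤ Λ₃ (Σ_{k≥N+1} 2^{γ(N−k)} a_k + 2^{γN})`. -/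
theorem stmt18 (Λ₁ Λ₂ γ : ℝ) (hΛ₁ : 0 < Λ₁) (hΛ₂ : 0 < Λ₂) (hγ : 0 < γ)
    (L : ℕ) (hL : 1 ≤ L) :
    ∃ Λ₃ : ℝ, 0 < Λ₃ ∧ ∃ Nbar : ℤ, Nbar ≤ 0 ∧
      ∀ a : ℤ → ℝ, (∀ k, 0 ≤ a k) → Summable a →
        (∀ N : ℤ, N ≤ 0 →
          (∑' k : {k : ℤ // k ≤ N}, a k.1) ≤
            (1 / 2) * (∑' k : {k : ℤ // k ≤ N + (L : ℤ)}, a k.1)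
              + Λ₁ * (∑' k : {k : ℤ // k ≤ N}, (2 : ℝ) ^ (γ * ((k.1 : ℝ) - (N : ℝ))) * a k.1)
              + Λ₂ * (∑' k : {k : ℤ // N + 1 ≤ k}, (2 : ℝ) ^ (γ * ((N : ℝ) - (k.1 : ℝ))) * a k.1)
              + Λ₂ * (2 : ℝ) ^ (γ * (N : ℝ))) →
        ∀ N : ℤ, N ≤ Nbar →
          (∑' k : {k : ℤ // k ≤ N}, a k.1) ≤
            Λ₃ * ((∑' k : {k : ℤ // N + 1 ≤ k}, (2 : ℝ) ^ (γ * ((N : ℝ) - (k.1 : ℝ))) * a k.1)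
              + (2 : ℝ) ^ (γ * (N : ℝ))) :=
  stmt18_general Λ₁ Λ₂ γ hΛ₁ hΛ₂ hγ L
end
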